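/- arXiv:2305.00467 — 8 statements merged into one kernel-verified Lean document; each statement's English description precedes it below -/
import Mathlib

section
/- For every integer n ≥ 4, the iteration time of the cycle C_n equals 1 in each of the P3, geodesic, and monophonic convexities. -/
/-- Convex hull: smallest `I`-closed superset. -/
def convexHullOf {V : Type*} (I : Set V → Set V) (S : Set V) : Set V :=
  ⋂₀ {T | S ⊆ T ∧ I T ⊆ T}

/-- Iteration time of a set: least number of applications of `I` producing the hull. -/
noncomputable def iterTimeSet {V : Type*} (I : Set V → Set V) (S : Set V) : ℕ :=
  sInf {k | I^[k] S = convexHullOf I S}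

/-- Iteration time of the convexity: maximum over all vertex subsets. -/
noncomputable def iterTime {V : Type*} (I : Set V → Set V) : ℕ :=
  ⨆ S : Set V, iterTimeSet I S

def p3Interval {V : Type*} (G : SimpleGraph V) (S : Set V) : Set V :=
  S ∪ {v | ∃ a ∈ S, ∃ b ∈ S, a ≠ b ∧ G.Adj v a ∧ G.Adj v b}

/-- `p` is an induced path: a path such that every edge of `G` between its vertices
is an edge of the path. -/
def IsInducedPathWalk {V : Type*} (G : SimpleGraph V) {x y : V} (p : G.Walk x y) : Prop :=
  p.IsPath ∧ ∀ a ∈ p.support, ∀ b ∈ p.support, G.Adj a b → p.toSubgraph.Adj a b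

/-- Monophonic interval: vertices on induced paths between vertices of `S`. -/
def monoInterval {V : Type*} (G : SimpleGraph V) (S : Set V) : Set V :=
  {v | ∃ x ∈ S, ∃ y ∈ S, ∃ p : G.Walk x y, IsInducedPathWalk G p ∧ v ∈ p.support}

/-- Geodesic interval: vertices on shortest paths between vertices of `S`. -/
def geoInterval {V : Type*} (G : SimpleGraph V) (S : Set V) : Set V :=
  {v | ∃ x ∈ S, ∃ y ∈ S, ∃ p : G.Walk x y, p.IsPath ∧ p.length = G.dist x y ∧ v ∈ p.support}

namespace Stmt5Aux
open SimpleGraph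
open Fin.NatCast Fin.CommRing

/-! ### General framework -/

section framework
variable {V : Type*} (I : Set V → Set V)

lemma hull_eq (mono : ∀ S T : Set V, S ⊆ T → I S ⊆ I T)
    (ext : ∀ S, S ⊆ I S) (closed : ∀ S, I (I S) ⊆ I S) (S : Set V) :
    convexHullOf I S = I S := by
  apply subset_antisymm
  · exact Set.sInter_subset_of_mem ⟨ext S, closed S⟩
  · apply Set.subset_sInter
    rintro T ⟨hST, hT⟩
    exact (mono S T hST).trans hT

lemma iterTime_eq_one (mono : ∀ S T : Set V, S ⊆ T → I S ⊆ I T)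
    (ext : ∀ S, S ⊆ I S) (closed : ∀ S, I (I S) ⊆ I S)
    (S₀ : Set V) (h₀ : I S₀ ≠ S₀) : iterTime I = 1 := by
  have hull := hull_eq I mono ext closed
  have hle : ∀ S : Set V, iterTimeSet I S ≤ 1 := by
    intro S
    apply Nat.sInf_le
    show I^[1] S = convexHullOf I S
    rw [Function.iterate_one, hull S]
  have h1 : iterTimeSet I S₀ = 1 := by
    have hmem : 1 ∈ {k | I^[k] S₀ = convexHullOf I S₀} := by
      show I^[1] S₀ = convexHullOf I S₀
      rw [Function.iterate_one, hull S₀]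
    have h0 : 0 ∉ {k | I^[k] S₀ = convexHullOf I S₀} := by
      intro hc
      have : S₀ = convexHullOf I S₀ := hc
      rw [hull S₀] at this
      exact h₀ this.symm
    refine le_antisymm (Nat.sInf_le hmem) ?_
    rcases Nat.eq_zero_or_pos (sInf {k | I^[k] S₀ = convexHullOf I S₀}) with hz | hp
    · rw [Nat.sInf_eq_zero] at hz
      rcases hz with hz | hz
      · exact absurd hz h0
      · rw [Set.eq_empty_iff_forall_notMem] at hz
        exact absurd hmem (hz 1)
    · exact hp
  have hbdd : BddAbove (Set.range fun S : Set V => iterTimeSet I S) := by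
    refine ⟨1, ?_⟩
    rintro _ ⟨S, rfl⟩
    exact hle S
  apply le_antisymm
  · exact ciSup_le hle
  · calc (1:ℕ) = iterTimeSet I S₀ := h1.symm
      _ ≤ ⨆ S : Set V, iterTimeSet I S := le_ciSup hbdd S₀

end framework

/-! ### Arc arithmetic on `Fin n` -/

variable {n : ℕ}

/-- arc length from x to y going in + direction -/
def A (x y : Fin n) : ℕ := (y - x).val

section arith
variable [NeZero n]

lemma A_lt (x y : Fin n) : A x y < n := (y - x).is_lt
@[simp] lemma A_self (x : Fin n) : A x x = 0 := by simp [A]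
lemma A_eq_zero {x y : Fin n} (h : A x y = 0) : x = y := by
  have : y - x = 0 := Fin.ext (by simpa [A] using h)
  exact (sub_eq_zero.mp this).symm
lemma cast_A (x y : Fin n) : ((A x y : ℕ) : Fin n) = y - x := Fin.cast_val_eq_self _
lemma add_A (x y : Fin n) : x + ((A x y : ℕ) : Fin n) = y := by rw [cast_A]; ring

lemma val_cast_of_lt {k : ℕ} (h : k < n) : ((k : ℕ) : Fin n).val = k := by
  rw [Fin.val_natCast, Nat.mod_eq_of_lt h]

lemma A_sum {x y : Fin n} (hne : x ≠ y) : A x y + A y x = n := by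
  have h1 : y - x ≠ 0 := sub_ne_zero.mpr (Ne.symm hne)
  have h2 : ((y - x) + (x - y)) = 0 := by ring
  rw [Fin.add_def] at h2
  have h3 := Fin.ext_iff.mp h2
  simp only [Fin.val_zero] at h3
  have b1 := (y - x).is_lt; have b2 := (x - y).is_lt
  have hv : (y - x).val ≠ 0 := fun hc => h1 (Fin.ext hc)
  show (y-x).val + (x-y).val = n
  rcases Nat.lt_or_ge ((y-x).val + (x-y).val) n with hl | hg
  · rw [Nat.mod_eq_of_lt hl] at h3; omega
  · rw [Nat.mod_eq_sub_mod hg, Nat.mod_eq_of_lt (by omega)] at h3; omega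

/-- if A p v ≤ A p q then v is on the +arc from p to q -/
lemma F2 {p q v : Fin n} (h : A p v ≤ A p q) : A p v + A v q = A p q := by
  have hq : q - v = ((A p q - A p v : ℕ) : Fin n) := by
    rw [Nat.cast_sub h, cast_A, cast_A]; ring
  have : A v q = A p q - A p v := by
    rw [A, hq, val_cast_of_lt (lt_of_le_of_lt (Nat.sub_le _ _) (A_lt p q))]
  omega

lemma F2' {p q v : Fin n} (h : A v q ≤ A p q) : A p v + A v q = A p q := by
  have hq : v - p = ((A p q - A v q : ℕ) : Fin n) := by
    rw [Nat.cast_sub h, cast_A, cast_A]; ring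
  have : A p v = A p q - A v q := by
    rw [A, hq, val_cast_of_lt (lt_of_le_of_lt (Nat.sub_le _ _) (A_lt p q))]
  omega

lemma F4 {p q r : Fin n} (h : A p q + A q r < n) : A p q + A q r = A p r := by
  have hr : r - p = ((A p q + A q r : ℕ) : Fin n) := by
    rw [Nat.cast_add, cast_A, cast_A]; ring
  have : A p r = A p q + A q r := by rw [A, hr, val_cast_of_lt h]
  omega

lemma val_cast_sub {i j : ℕ} (hi : i < n) (hj : j < n) :
    (((i:ℕ) : Fin n) - ((j:ℕ) : Fin n)).val = if j ≤ i then i - j else i + n - j := by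
  split_ifs with hle
  · rw [← Nat.cast_sub hle, val_cast_of_lt (by omega)]
  · have he : ((i:ℕ) : Fin n) - ((j:ℕ) : Fin n) = ((i + n - j : ℕ) : Fin n) := by
      rw [sub_eq_iff_eq_add, ← Nat.cast_add]
      have : i + n - j + j = i + n := by omega
      rw [this, Nat.cast_add, Fin.natCast_self, add_zero]
    rw [he, val_cast_of_lt (by omega)]

/-- core arithmetic lemma for geodesic convexity of the cycle -/
lemma core {x1 y1 x2 y2 u v w : Fin n}
    (h1 : A x1 u + A u y1 = A x1 y1)
    (h3 : A x2 w + A w y2 = A x2 y2) (c2 : ¬ A x2 v ≤ A x2 y2)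
    (h5 : A u v + A v w = A u w) (h6 : A u w ≤ A w u)
    (c1 : ¬ A x1 v ≤ A x1 y1) :
    A y1 v + A v x2 = A y1 x2 ∧ A y1 x2 ≤ A x2 y1 := by
  push_neg at c1 c2
  have ha : A u y1 ≤ A u v := by
    by_contra hc
    push_neg at hc
    have h7 : A x1 u + A u v < n := by
      have := A_lt x1 y1; omega
    have := F4 h7
    omega
  have hb : A u y1 + A y1 v = A u v := F2 ha
  have hc : A v x2 ≤ A v w := by
    by_contra hcc
    push_neg at hcc
    have hw : A v w + A w x2 = A v x2 := F2 (le_of_lt hcc)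
    by_cases hvx : v = x2
    · subst hvx; simp at c2
    by_cases hwx : w = x2
    · subst hwx; simp at hw; omega
    · have e1 : A v x2 + A x2 v = n := A_sum (fun h => hvx h)
      have e2 : A w x2 + A x2 w = n := A_sum (fun h => hwx h)
      omega
  have hd : A v x2 + A x2 w = A v w := F2 hc
  have he : A y1 v + A v x2 = A y1 x2 := by
    apply F4
    have := A_lt u w; omega
  refine ⟨he, ?_⟩
  by_cases hyx : y1 = x2
  · subst hyx; omega
  by_cases huw : u = w
  · exfalso
    subst huw
    simp only [A_self] at h5
    have hv : u = v := A_eq_zero (by omega)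
    subst hv
    simp only [A_self] at hb hd
    have h8 : u = y1 := A_eq_zero (by omega)
    have h9 : u = x2 := A_eq_zero (by omega)
    exact hyx (h8 ▸ h9)
  · have e3 : A y1 x2 + A x2 y1 = n := A_sum hyx
    have e4 : A u w + A w u = n := A_sum huw
    omega
end arith

/-! ### Walks in the cycle graph -/

section walks
open SimpleGraph.Walk
variable [NeZero n] (hn : 4 ≤ n)
include hn

lemma adj_succ (x : Fin n) : (SimpleGraph.cycleGraph n).Adj x (x + 1) := by
  rw [cycleGraph_adj']
  right
  have h : x + 1 - x = 1 := by ring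
  rw [h, Fin.val_one']
  exact Nat.mod_eq_of_lt (by omega)

def arcWalk (x : Fin n) : (L : ℕ) → (SimpleGraph.cycleGraph n).Walk x (x + ((L:ℕ) : Fin n))
  | 0 => Walk.nil.copy rfl (by simp)
  | (L+1) => ((arcWalk (x+1) L).copy rfl (by push_cast; ring)).cons (adj_succ hn x)

lemma arcWalk_length (x : Fin n) (L : ℕ) : (arcWalk hn x L).length = L := by
  induction L generalizing x with
  | zero => simp [arcWalk]
  | succ L ih => simp [arcWalk, ih]

lemma arcWalk_getVert (x : Fin n) (L : ℕ) {k : ℕ} (hk : k ≤ L) :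
    (arcWalk hn x L).getVert k = x + ((k:ℕ) : Fin n) := by
  induction L generalizing x k with
  | zero => interval_cases k; simp [arcWalk]
  | succ L ih =>
    cases k with
    | zero => simp [arcWalk]
    | succ k =>
      rw [arcWalk, Walk.getVert_cons_succ, Walk.getVert_copy,
        ih _ (by omega)]
      push_cast
      ring

lemma arcWalk_support (x : Fin n) (L : ℕ) :
    (arcWalk hn x L).support = (List.range (L+1)).map (fun i => x + ((i:ℕ) : Fin n)) := by
  induction L generalizing x with
  | zero => simp [arcWalk, List.range_succ]
  | succ L ih =>
    rw [arcWalk]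
    rw [Walk.support_cons, Walk.support_copy, ih,
      List.range_succ_eq_map (n := L+1), List.map_cons, List.map_map]
    congr 1
    · simp
    · apply List.map_congr_left
      intro i _
      simp only [Function.comp_apply]
      push_cast
      ring

lemma arcWalk_isPath (x : Fin n) {L : ℕ} (hL : L < n) : (arcWalk hn x L).IsPath := by
  rw [Walk.isPath_def, arcWalk_support]
  refine List.Nodup.map_on ?_ List.nodup_range
  intro i hi j hj hij
  rw [List.mem_range] at hi hj
  have : ((i:ℕ) : Fin n).val = ((j:ℕ) : Fin n).val := by
    have := add_left_cancel hij; rw [this]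
  rw [val_cast_of_lt (by omega), val_cast_of_lt (by omega)] at this
  exact this

lemma mem_arcWalk_support (x : Fin n) (L : ℕ) (v : Fin n) :
    v ∈ (arcWalk hn x L).support ↔ ∃ i ≤ L, v = x + ((i:ℕ) : Fin n) := by
  rw [arcWalk_support]
  simp only [List.mem_map, List.mem_range]
  constructor
  · rintro ⟨i, hi, rfl⟩; exact ⟨i, by omega, rfl⟩
  · rintro ⟨i, hi, rfl⟩; exact ⟨i, by omega, rfl⟩

/-- every path in the cycle is a monotone arc -/
lemma path_eq_arc {x y : Fin n} (p : (SimpleGraph.cycleGraph n).Walk x y) (hp : p.IsPath) :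
    (∀ k ≤ p.length, p.getVert k = x + ((k:ℕ) : Fin n)) ∨
    (∀ k ≤ p.length, p.getVert k = x - ((k:ℕ) : Fin n)) := by
  induction p with
  | nil =>
    left; intro k hk
    have hk0 : k = 0 := by simpa using hk
    subst hk0; simp
  | @cons a z y h q ih =>
    rw [Walk.cons_isPath_iff] at hp
    obtain ⟨hq, hnot⟩ := hp
    have hz : z = a + 1 ∨ z = a - 1 := by
      rw [cycleGraph_adj'] at h
      rcases h with h | h
      · right
        have h1 : a - z = 1 :=
          Fin.ext (by rw [h, Fin.val_one', Nat.mod_eq_of_lt (by omega)])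
        rw [← h1]; ring
      · left
        have h1 : z - a = 1 :=
          Fin.ext (by rw [h, Fin.val_one', Nat.mod_eq_of_lt (by omega)])
        rw [← h1]; ring
    rcases hz with rfl | rfl
    · rcases ih hq with hplus | hminus
      · left
        intro k hk
        cases k with
        | zero => simp
        | succ k =>
          rw [Walk.getVert_cons_succ, hplus k (by simpa using hk)]
          push_cast; ring
      · have hq0 : q.length = 0 := by
          by_contra hlen
          apply hnot
          rw [Walk.mem_support_iff_exists_getVert]
          refine ⟨1, ?_, by omega⟩
          rw [hminus 1 (by omega)]
          push_cast; ring
        left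
        intro k hk
        rw [Walk.length_cons, hq0] at hk
        interval_cases k
        · simp
        · rw [show (1:ℕ) = 0 + 1 from rfl, Walk.getVert_cons_succ, hminus 0 (by omega)]
          push_cast; ring
    · rcases ih hq with hplus | hminus
      · have hq0 : q.length = 0 := by
          by_contra hlen
          apply hnot
          rw [Walk.mem_support_iff_exists_getVert]
          refine ⟨1, ?_, by omega⟩
          rw [hplus 1 (by omega)]
          push_cast; ring
        right
        intro k hk
        rw [Walk.length_cons, hq0] at hk
        interval_cases k
        · simp
        · rw [show (1:ℕ) = 0 + 1 from rfl, Walk.getVert_cons_succ, hplus 0 (by omega)]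
          push_cast; ring
      · right
        intro k hk
        cases k with
        | zero => simp
        | succ k =>
          rw [Walk.getVert_cons_succ, hminus k (by simpa using hk)]
          push_cast; ring

lemma cycle_connected : (SimpleGraph.cycleGraph n).Connected := by
  obtain ⟨m, rfl⟩ : ∃ m, n = m + 1 := ⟨n - 1, by omega⟩
  exact cycleGraph_connected

lemma length_lt_n {x y : Fin n} {p : (SimpleGraph.cycleGraph n).Walk x y}
    (hp : p.IsPath) : p.length < n := by
  have := hp.length_lt
  rwa [Fintype.card_fin] at this

lemma dist_le_A (x y : Fin n) : (SimpleGraph.cycleGraph n).dist x y ≤ A x y := by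
  have h := SimpleGraph.dist_le ((arcWalk hn x (A x y)).copy rfl (add_A x y))
  rwa [Walk.length_copy, arcWalk_length] at h

lemma dist_eq (x y : Fin n) :
    (SimpleGraph.cycleGraph n).dist x y = min (A x y) (A y x) := by
  apply le_antisymm
  · refine le_min (dist_le_A hn x y) ?_
    rw [SimpleGraph.dist_comm]
    exact dist_le_A hn y x
  · obtain ⟨p, hp, hlen⟩ := (cycle_connected hn).exists_path_of_dist x y
    have hLn : p.length < n := length_lt_n hn hp
    obtain ⟨L, hL⟩ : ∃ L, p.length = L := ⟨_, rfl⟩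
    rw [hL] at hLn hlen
    rcases path_eq_arc hn p hp with hplus | hminus
    · have hy : y = x + ((L : ℕ) : Fin n) := by
        have h := hplus p.length le_rfl
        rw [p.getVert_length, hL] at h
        exact h
      have hA : A x y = L := by
        rw [A, hy, add_sub_cancel_left, val_cast_of_lt hLn]
      calc min (A x y) (A y x) ≤ A x y := min_le_left _ _
        _ = L := hA
        _ = _ := hlen
    · have hy : y = x - ((L : ℕ) : Fin n) := by
        have h := hminus p.length le_rfl
        rw [p.getVert_length, hL] at h
        exact h
      have hA : A y x = L := by
        rw [A, hy]
        have : x - (x - ((L : ℕ) : Fin n)) = ((L : ℕ) : Fin n) := by ring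
        rw [this, val_cast_of_lt hLn]
      calc min (A x y) (A y x) ≤ A y x := min_le_right _ _
        _ = L := hA
        _ = _ := hlen

/-! ### Geodesic interval -/

lemma geo_char (S : Set (Fin n)) :
    geoInterval (SimpleGraph.cycleGraph n) S =
      {v | ∃ x ∈ S, ∃ y ∈ S, A x v + A v y = A x y ∧ A x y ≤ A y x} := by
  ext v
  constructor
  · rintro ⟨x, hx, y, hy, p, hp, hlen, hv⟩
    have hLn : p.length < n := length_lt_n hn hp
    rw [Walk.mem_support_iff_exists_getVert] at hv
    obtain ⟨k, hkv, hk⟩ := hv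
    rw [dist_eq hn] at hlen
    obtain ⟨L, hL⟩ : ∃ L, p.length = L := ⟨_, rfl⟩
    rw [hL] at hLn hlen hk
    rcases path_eq_arc hn p hp with hplus | hminus
    · have hy' : y = x + ((L : ℕ) : Fin n) := by
        have h := hplus p.length le_rfl
        rw [p.getVert_length, hL] at h
        exact h
      have hA : A x y = L := by
        rw [A, hy', add_sub_cancel_left, val_cast_of_lt hLn]
      have hle : A x y ≤ A y x := by
        rw [hA, hlen]; exact min_le_right _ _
      have hAv : A x v = k := by
        rw [A, ← hkv, hplus k (by omega), add_sub_cancel_left, val_cast_of_lt (by omega)]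
      refine ⟨x, hx, y, hy, F2 ?_, hle⟩
      rw [hAv, hA]; exact hk
    · have hy' : y = x - ((L : ℕ) : Fin n) := by
        have h := hminus p.length le_rfl
        rw [p.getVert_length, hL] at h
        exact h
      have hA : A y x = L := by
        rw [A, hy']
        have : x - (x - ((L : ℕ) : Fin n)) = ((L : ℕ) : Fin n) := by ring
        rw [this, val_cast_of_lt hLn]
      have hle : A y x ≤ A x y := by
        rw [hA, hlen]; exact min_le_left _ _
      have hAv : A y v = L - k := by
        rw [A, ← hkv, hminus k (by omega), hy']
        have : x - ((k:ℕ) : Fin n) - (x - ((L : ℕ) : Fin n))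
            = ((L - k : ℕ) : Fin n) := by
          rw [Nat.cast_sub hk]; ring
        rw [this, val_cast_of_lt (by omega)]
      refine ⟨y, hy, x, hx, F2 ?_, hle⟩
      rw [hAv, hA]; omega
  · rintro ⟨x, hx, y, hy, heq, hle⟩
    refine ⟨x, hx, y, hy, (arcWalk hn x (A x y)).copy rfl (add_A x y), ?_, ?_, ?_⟩
    · rw [Walk.isPath_copy]; exact arcWalk_isPath hn x (A_lt x y)
    · rw [Walk.length_copy, arcWalk_length, dist_eq hn, min_eq_left hle]
    · rw [Walk.support_copy, mem_arcWalk_support]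
      refine ⟨A x v, by omega, (add_A x v).symm⟩

lemma geo_ext (S : Set (Fin n)) : S ⊆ geoInterval (SimpleGraph.cycleGraph n) S := by
  rw [geo_char hn]
  intro v hv
  exact ⟨v, hv, v, hv, by simp, le_rfl⟩

lemma geo_mono (S T : Set (Fin n)) (h : S ⊆ T) :
    geoInterval (SimpleGraph.cycleGraph n) S ⊆ geoInterval (SimpleGraph.cycleGraph n) T := by
  rintro v ⟨x, hx, y, hy, hrest⟩
  exact ⟨x, h hx, y, h hy, hrest⟩

lemma geo_closed (S : Set (Fin n)) :
    geoInterval (SimpleGraph.cycleGraph n) (geoInterval (SimpleGraph.cycleGraph n) S)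
      ⊆ geoInterval (SimpleGraph.cycleGraph n) S := by
  rw [geo_char hn, geo_char hn S]
  rintro v ⟨u, hu, w, hw, h5, h6⟩
  obtain ⟨x1, hx1, y1, hy1, h1, h2⟩ := hu
  obtain ⟨x2, hx2, y2, hy2, h3, h4⟩ := hw
  by_cases c1 : A x1 v ≤ A x1 y1
  · exact ⟨x1, hx1, y1, hy1, F2 c1, h2⟩
  by_cases c2 : A x2 v ≤ A x2 y2
  · exact ⟨x2, hx2, y2, hy2, F2 c2, h4⟩
  · obtain ⟨ha, hb⟩ := core h1 h3 c2 h5 h6 c1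
    exact ⟨y1, hy1, x2, hx2, ha, hb⟩

/-! ### Monophonic interval -/

lemma induced_copy {G : SimpleGraph (Fin n)} {x y x' y' : Fin n}
    (p : G.Walk x y) (h : x = x') (h' : y = y') (hp : IsInducedPathWalk G p) :
    IsInducedPathWalk G (p.copy h h') := by
  subst h; subst h'
  rwa [Walk.copy_rfl_rfl]

lemma arc_induced (x : Fin n) {L : ℕ} (hL : L ≤ n - 2) :
    IsInducedPathWalk (SimpleGraph.cycleGraph n) (arcWalk hn x L) := by
  refine ⟨arcWalk_isPath hn x (by omega), ?_⟩
  intro a ha b hb hadj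
  rw [mem_arcWalk_support] at ha hb
  obtain ⟨i, hi, rfl⟩ := ha
  obtain ⟨j, hj, rfl⟩ := hb
  rw [cycleGraph_adj'] at hadj
  have hsub1 : x + ((i:ℕ) : Fin n) - (x + ((j:ℕ) : Fin n)) = ((i:ℕ) : Fin n) - ((j:ℕ) : Fin n) := by ring
  have hsub2 : x + ((j:ℕ) : Fin n) - (x + ((i:ℕ) : Fin n)) = ((j:ℕ) : Fin n) - ((i:ℕ) : Fin n) := by ring
  rw [hsub1, hsub2, val_cast_sub (by omega) (by omega), val_cast_sub (by omega) (by omega)] at hadj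
  have hij : i = j + 1 ∨ j = i + 1 := by
    rcases hadj with h | h <;> [skip; skip] <;>
      · split_ifs at h <;> omega
  rcases hij with rfl | rfl
  · have := Walk.toSubgraph_adj_getVert (arcWalk hn x L) (i := j) (by rw [arcWalk_length]; omega)
    rw [arcWalk_getVert hn x L (by omega : j ≤ L),
      arcWalk_getVert hn x L (by omega : j + 1 ≤ L)] at this
    exact this.symm
  · have := Walk.toSubgraph_adj_getVert (arcWalk hn x L) (i := i) (by rw [arcWalk_length]; omega)
    rw [arcWalk_getVert hn x L (by omega : i ≤ L),
      arcWalk_getVert hn x L (by omega : i + 1 ≤ L)] at this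
    exact this

lemma not_adj_iff {x y : Fin n} (hxy : x ≠ y) :
    ¬ (SimpleGraph.cycleGraph n).Adj x y ↔ (A x y ≠ 1 ∧ A y x ≠ 1) := by
  rw [cycleGraph_adj']
  show ¬(A y x = 1 ∨ A x y = 1) ↔ _
  tauto

lemma mono_univ {S : Set (Fin n)} {x y : Fin n} (hx : x ∈ S) (hy : y ∈ S)
    (hxy : x ≠ y) (hnadj : ¬ (SimpleGraph.cycleGraph n).Adj x y) :
    monoInterval (SimpleGraph.cycleGraph n) S = Set.univ := by
  rw [not_adj_iff hn hxy] at hnadj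
  obtain ⟨hA1, hA2⟩ := hnadj
  have hsum := A_sum hxy
  have hz1 : A x y ≠ 0 := fun h => hxy (A_eq_zero h)
  have hz2 : A y x ≠ 0 := fun h => hxy (A_eq_zero h).symm
  have hb1 : 2 ≤ A x y ∧ A x y ≤ n - 2 := by omega
  have hb2 : 2 ≤ A y x ∧ A y x ≤ n - 2 := by omega
  apply Set.eq_univ_of_forall
  intro v
  by_cases hv : A x v ≤ A x y
  · refine ⟨x, hx, y, hy, (arcWalk hn x (A x y)).copy rfl (add_A x y), ?_, ?_⟩
    · exact induced_copy hn (arcWalk hn x (A x y)) rfl (add_A x y) (arc_induced hn x hb1.2)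
    · rw [Walk.support_copy, mem_arcWalk_support]
      exact ⟨A x v, hv, (add_A x v).symm⟩
  · push_neg at hv
    refine ⟨y, hy, x, hx, (arcWalk hn y (A y x)).copy rfl (add_A y x), ?_, ?_⟩
    · exact induced_copy hn (arcWalk hn y (A y x)) rfl (add_A y x) (arc_induced hn y hb2.2)
    · rw [Walk.support_copy, mem_arcWalk_support]
      refine ⟨A x v - A x y, by have := A_lt x v; omega, ?_⟩
      have h7 : A x y + (A x v - A x y) = A x v := by omega
      calc v = x + ((A x v : ℕ) : Fin n) := (add_A x v).symm
        _ = x + ((A x y + (A x v - A x y) : ℕ) : Fin n) := by rw [h7]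
        _ = x + (((A x y : ℕ) : Fin n) + ((A x v - A x y : ℕ) : Fin n)) := by
            rw [Nat.cast_add]
        _ = (x + ((A x y : ℕ) : Fin n)) + ((A x v - A x y : ℕ) : Fin n) := by
            rw [add_assoc]
        _ = y + ((A x v - A x y : ℕ) : Fin n) := by rw [add_A]

lemma mono_plus_case {x y v : Fin n} (hxy : x ≠ y)
    (hadj : (SimpleGraph.cycleGraph n).Adj x y)
    (p : (SimpleGraph.cycleGraph n).Walk x y) (hind : IsInducedPathWalk (SimpleGraph.cycleGraph n) p)
    (hplus : ∀ k ≤ p.length, p.getVert k = x + ((k:ℕ) : Fin n))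
    (hv : v ∈ p.support) : v = x ∨ v = y := by
  have hLn : p.length < n := length_lt_n hn hind.1
  obtain ⟨L, hL⟩ : ∃ L, p.length = L := ⟨_, rfl⟩
  rw [hL] at hLn
  have hy' : y = x + ((L : ℕ) : Fin n) := by
    have h := hplus p.length le_rfl
    rw [p.getVert_length, hL] at h
    exact h
  have hA : A x y = L := by
    rw [A, hy', add_sub_cancel_left, val_cast_of_lt hLn]
  have hL0 : L ≠ 0 := by
    intro h
    apply hxy
    rw [hy', h]
    simp
  have hadj' := hadj
  rw [cycleGraph_adj'] at hadj'
  have hLcase : L = 1 ∨ L = n - 1 := by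
    rcases hadj' with h | h
    · have : A y x = 1 := h
      have := A_sum hxy
      omega
    · have : A x y = 1 := h
      omega
  rcases hLcase with hLc | hLc
  · rw [Walk.mem_support_iff_exists_getVert] at hv
    obtain ⟨k, hkv, hk⟩ := hv
    rw [hL, hLc] at hk
    interval_cases k
    · left; rw [← hkv]; simp
    · right
      have h := hplus 1 (by omega)
      rw [hkv] at h
      rw [h, hy', hLc]
  · exfalso
    have htsub := hind.2 x p.start_mem_support y p.end_mem_support hadj
    rw [Walk.toSubgraph_adj_iff] at htsub
    obtain ⟨i, hs, hi⟩ := htsub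
    rw [hL] at hi
    rw [hplus i (by omega), hplus (i+1) (by omega), Sym2.eq_iff] at hs
    rcases hs with ⟨hs1, hs2⟩ | ⟨hs1, hs2⟩
    · have : ((i:ℕ) : Fin n).val = 0 := by
        have := add_eq_left.mp hs1
        rw [this]; rfl
      rw [val_cast_of_lt (by omega)] at this
      subst this
      rw [hy'] at hs2
      have h1 : ((1:ℕ) : Fin n) = ((L : ℕ) : Fin n) := by
        have := add_left_cancel hs2
        simpa using this
      have := Fin.ext_iff.mp h1
      rw [val_cast_of_lt (by omega), val_cast_of_lt hLn] at this
      omega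
    · have : ((i+1:ℕ) : Fin n).val = 0 := by
        have := add_eq_left.mp hs2
        rw [this]; rfl
      rw [val_cast_of_lt (by omega)] at this
      omega

lemma mono_subset_self {S : Set (Fin n)}
    (h : ∀ x ∈ S, ∀ y ∈ S, x ≠ y → (SimpleGraph.cycleGraph n).Adj x y) :
    monoInterval (SimpleGraph.cycleGraph n) S ⊆ S := by
  rintro v ⟨x, hx, y, hy, p, hp, hv⟩
  by_cases hxy : x = y
  · subst hxy
    cases p with
    | nil =>
      have hvx : v = x := by simpa using hv
      exact hvx ▸ hx
    | cons hadj q =>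
      have hp1 := hp.1
      rw [Walk.cons_isPath_iff] at hp1
      exact absurd q.end_mem_support hp1.2
  · have hadj := h x hx y hy hxy
    rcases path_eq_arc hn p hp.1 with hplus | hminus
    · rcases mono_plus_case hn hxy hadj p hp hplus hv with rfl | rfl
      · exact hx
      · exact hy
    · -- use the reverse walk
      have hrev : IsInducedPathWalk (SimpleGraph.cycleGraph n) p.reverse := by
        refine ⟨hp.1.reverse, ?_⟩
        intro a ha b hb hab
        rw [Walk.toSubgraph_reverse]
        rw [Walk.support_reverse, List.mem_reverse] at ha hb
        exact hp.2 a ha b hb hab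
      obtain ⟨L, hL⟩ : ∃ L, p.length = L := ⟨_, rfl⟩
      have hyx : y = x - ((L : ℕ) : Fin n) := by
        have h := hminus p.length le_rfl
        rw [p.getVert_length, hL] at h
        exact h
      have hplusrev : ∀ k ≤ p.reverse.length,
          p.reverse.getVert k = y + ((k:ℕ) : Fin n) := by
        intro k hk
        rw [Walk.length_reverse, hL] at hk
        rw [Walk.getVert_reverse, hL, hminus (L - k) (by omega)]
        rw [hyx, Nat.cast_sub hk]
        ring
      have hvrev : v ∈ p.reverse.support := by
        rw [Walk.support_reverse, List.mem_reverse]; exact hv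
      rcases mono_plus_case hn (Ne.symm hxy) hadj.symm p.reverse hrev hplusrev hvrev with rfl | rfl
      · exact hy
      · exact hx

lemma mono_ext (S : Set (Fin n)) : S ⊆ monoInterval (SimpleGraph.cycleGraph n) S := by
  intro v hv
  refine ⟨v, hv, v, hv, Walk.nil, ⟨Walk.IsPath.nil, ?_⟩, by simp⟩
  intro a ha b hb hab
  simp only [Walk.support_nil, List.mem_singleton] at ha hb
  subst ha; subst hb
  exact absurd hab ((SimpleGraph.cycleGraph n).irrefl)

lemma mono_mono (S T : Set (Fin n)) (h : S ⊆ T) :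
    monoInterval (SimpleGraph.cycleGraph n) S ⊆ monoInterval (SimpleGraph.cycleGraph n) T := by
  rintro v ⟨x, hx, y, hy, hrest⟩
  exact ⟨x, h hx, y, h hy, hrest⟩

lemma mono_closed (S : Set (Fin n)) :
    monoInterval (SimpleGraph.cycleGraph n) (monoInterval (SimpleGraph.cycleGraph n) S)
      ⊆ monoInterval (SimpleGraph.cycleGraph n) S := by
  by_cases hc : ∃ x ∈ S, ∃ y ∈ S, x ≠ y ∧ ¬ (SimpleGraph.cycleGraph n).Adj x y
  · obtain ⟨x, hx, y, hy, hxy, hnadj⟩ := hc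
    rw [mono_univ hn hx hy hxy hnadj]
    exact fun v _ => trivial
  · push_neg at hc
    have heq : monoInterval (SimpleGraph.cycleGraph n) S = S :=
      subset_antisymm (mono_subset_self hn hc) (mono_ext hn S)
    rw [heq]
    exact mono_subset_self hn hc

/-! ### P3 interval -/

lemma adj_iff {u z : Fin n} :
    (SimpleGraph.cycleGraph n).Adj u z ↔ z = u + 1 ∨ z = u - 1 := by
  rw [cycleGraph_adj']
  constructor
  · rintro (h | h)
    · right
      have h1 : u - z = 1 :=
        Fin.ext (by rw [h, Fin.val_one', Nat.mod_eq_of_lt (by omega)])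
      rw [← h1]; ring
    · left
      have h1 : z - u = 1 :=
        Fin.ext (by rw [h, Fin.val_one', Nat.mod_eq_of_lt (by omega)])
      rw [← h1]; ring
  · rintro (rfl | rfl)
    · right
      have : u + 1 - u = 1 := by ring
      rw [this, Fin.val_one']
      exact Nat.mod_eq_of_lt (by omega)
    · left
      have : u - (u - 1) = 1 := by ring
      rw [this, Fin.val_one']
      exact Nat.mod_eq_of_lt (by omega)

lemma p3_closed (S : Set (Fin n)) :
    p3Interval (SimpleGraph.cycleGraph n) (p3Interval (SimpleGraph.cycleGraph n) S)
      ⊆ p3Interval (SimpleGraph.cycleGraph n) S := by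
  have key : ∀ a ∈ p3Interval (SimpleGraph.cycleGraph n) S, ∀ v : Fin n,
      (SimpleGraph.cycleGraph n).Adj v a → a ∈ S ∨ v ∈ S := by
    rintro a (ha | ⟨c, hc, d, hd, hcd, hac, had⟩) v hva
    · exact Or.inl ha
    · right
      rw [adj_iff hn] at hac had
      have hv : v = a + 1 ∨ v = a - 1 := by
        rw [← adj_iff hn]; exact hva.symm
      rcases hac with rfl | rfl <;> rcases had with rfl | rfl
      · exact absurd rfl hcd
      · rcases hv with rfl | rfl
        · exact hc
        · exact hd
      · rcases hv with rfl | rfl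
        · exact hd
        · exact hc
      · exact absurd rfl hcd
  rintro v (hv | ⟨a, ha, b, hb, hab, hva, hvb⟩)
  · exact hv
  · rcases key a ha v hva with haS | hvS
    · rcases key b hb v hvb with hbS | hvS
      · exact Or.inr ⟨a, haS, b, hbS, hab, hva, hvb⟩
      · exact Or.inl hvS
    · exact Or.inl hvS

lemma p3_ext (S : Set (Fin n)) : S ⊆ p3Interval (SimpleGraph.cycleGraph n) S :=
  Set.subset_union_left

lemma p3_mono (S T : Set (Fin n)) (h : S ⊆ T) :
    p3Interval (SimpleGraph.cycleGraph n) S ⊆ p3Interval (SimpleGraph.cycleGraph n) T := by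
  rintro v (hv | ⟨a, ha, b, hb, hrest⟩)
  · exact Or.inl (h hv)
  · exact Or.inr ⟨a, h ha, b, h hb, hrest⟩

/-! ### witnesses -/

lemma val_one_eq : ((1 : Fin n)).val = 1 := by
  rw [Fin.val_one']; exact Nat.mod_eq_of_lt (by omega)

lemma val_two_eq : ((2 : Fin n)).val = 2 := by
  have := Fin.val_ofNat n 2
  rwa [Nat.mod_eq_of_lt (by omega)] at this

lemma zero_ne_two : (0 : Fin n) ≠ 2 := by
  intro h
  have := Fin.ext_iff.mp h
  rw [val_two_eq hn] at this
  simp at this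

lemma one_ne_zero' : (1 : Fin n) ≠ 0 := by
  intro h
  have := Fin.ext_iff.mp h
  rw [val_one_eq hn] at this
  simp at this

lemma one_ne_two : (1 : Fin n) ≠ 2 := by
  intro h
  have := Fin.ext_iff.mp h
  rw [val_one_eq hn, val_two_eq hn] at this
  omega

lemma A02 : A (0 : Fin n) 2 = 2 := by
  rw [A, sub_zero, val_two_eq hn]

lemma not_adj_02 : ¬ (SimpleGraph.cycleGraph n).Adj (0 : Fin n) 2 := by
  rw [not_adj_iff hn (zero_ne_two hn)]
  have hsum := A_sum (zero_ne_two hn)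
  rw [A02 hn] at hsum ⊢
  omega

lemma one_mem_geo : (1 : Fin n) ∈ geoInterval (SimpleGraph.cycleGraph n) {(0 : Fin n), 2} := by
  rw [geo_char hn]
  refine ⟨0, Or.inl rfl, 2, Or.inr rfl, ?_, ?_⟩
  · have h1 : A (0:Fin n) 1 = 1 := by rw [A, sub_zero, val_one_eq hn]
    have h2 : A (1:Fin n) 2 = 1 := by
      rw [A]
      have : (2 : Fin n) - 1 = 1 := by ring
      rw [this, val_one_eq hn]
    rw [h1, h2, A02 hn]
  · have hsum := A_sum (zero_ne_two hn)
    rw [A02 hn] at hsum ⊢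
    omega

lemma p3_witness :
    p3Interval (SimpleGraph.cycleGraph n) {(0 : Fin n), 2} ≠ {(0 : Fin n), 2} := by
  intro h
  have h1 : (1 : Fin n) ∈ p3Interval (SimpleGraph.cycleGraph n) {(0 : Fin n), 2} := by
    refine Or.inr ⟨0, Or.inl rfl, 2, Or.inr rfl, zero_ne_two hn, ?_, ?_⟩
    · rw [adj_iff hn]
      right
      rw [sub_self]
    · rw [adj_iff hn]
      left
      exact one_add_one_eq_two.symm
  rw [h] at h1
  rcases h1 with h1 | h1
  · exact one_ne_zero' hn h1
  · exact one_ne_two hn h1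

lemma geo_witness :
    geoInterval (SimpleGraph.cycleGraph n) {(0 : Fin n), 2} ≠ {(0 : Fin n), 2} := by
  intro h
  have h1 := one_mem_geo hn
  rw [h] at h1
  rcases h1 with h1 | h1
  · exact one_ne_zero' hn h1
  · exact one_ne_two hn h1

lemma mono_witness :
    monoInterval (SimpleGraph.cycleGraph n) {(0 : Fin n), 2} ≠ {(0 : Fin n), 2} := by
  intro h
  rw [mono_univ hn (Or.inl rfl) (Or.inr rfl) (zero_ne_two hn) (not_adj_02 hn)] at h
  have h1 : (1 : Fin n) ∈ (Set.univ : Set (Fin n)) := trivial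
  rw [h] at h1
  rcases h1 with h1 | h1
  · exact one_ne_zero' hn h1
  · exact one_ne_two hn h1

end walks
end Stmt5Aux

/-- for `n ≥ 4`, the cycle `C_n` has iteration time 1 in each of the
P3, geodesic and monophonic convexities. -/
theorem stmt5 (n : ℕ) (hn : 4 ≤ n) :
    iterTime (p3Interval (SimpleGraph.cycleGraph n)) = 1 ∧
    iterTime (geoInterval (SimpleGraph.cycleGraph n)) = 1 ∧
    iterTime (monoInterval (SimpleGraph.cycleGraph n)) = 1 := by
  haveI : NeZero n := ⟨by omega⟩
  refine ⟨?_, ?_, ?_⟩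
  · exact Stmt5Aux.iterTime_eq_one _ (Stmt5Aux.p3_mono hn) (Stmt5Aux.p3_ext hn)
      (Stmt5Aux.p3_closed hn) _ (Stmt5Aux.p3_witness hn)
  · exact Stmt5Aux.iterTime_eq_one _ (Stmt5Aux.geo_mono hn) (Stmt5Aux.geo_ext hn)
      (Stmt5Aux.geo_closed hn) _ (Stmt5Aux.geo_witness hn)
  · exact Stmt5Aux.iterTime_eq_one _ (Stmt5Aux.mono_mono hn) (Stmt5Aux.mono_ext hn)
      (Stmt5Aux.mono_closed hn) _ (Stmt5Aux.mono_witness hn)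
end

section
/- Let T be a tree and k ≥ 1 an integer. The iteration time of T in the P3 convexity is at least k if and only if T contains a path v_1, v_2, ..., v_k such that v_i has degree at least 3 in T for every 1 ≤ i < k and v_k has degree at least 2 in T. -/
section Hull
variable {V : Type*} (T : SimpleGraph V)

lemma subset_p3 (S : Set V) : S ⊆ p3Interval T S := Set.subset_union_left

lemma p3_mono {S S' : Set V} (h : S ⊆ S') : p3Interval T S ⊆ p3Interval T S' := by
  rintro x (hx | ⟨a, ha, b, hb, hab, h1, h2⟩)
  · exact Or.inl (h hx)
  · exact Or.inr ⟨a, h ha, b, h hb, hab, h1, h2⟩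

lemma iter_le_iter {a b : ℕ} (h : a ≤ b) (S : Set V) :
    (p3Interval T)^[a] S ⊆ (p3Interval T)^[b] S := by
  induction b with
  | zero => simp_all
  | succ b ih =>
    rcases Nat.lt_or_ge a (b+1) with h' | h'
    · refine (ih (by omega)).trans ?_
      rw [Function.iterate_succ_apply']
      exact subset_p3 T _
    · have : a = b + 1 := by omega
      subst this; rfl

lemma subset_hull (S : Set V) : S ⊆ convexHullOf (p3Interval T) S := by
  intro x hx
  exact fun C hC => hC.1 hx

lemma hull_closed (S : Set V) :
    p3Interval T (convexHullOf (p3Interval T) S) ⊆ convexHullOf (p3Interval T) S := by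
  intro x hx C hC
  have h1 : convexHullOf (p3Interval T) S ⊆ C := Set.sInter_subset_of_mem hC
  exact hC.2 (p3_mono T h1 hx)

lemma iter_subset_hull (S : Set V) (j : ℕ) :
    (p3Interval T)^[j] S ⊆ convexHullOf (p3Interval T) S := by
  induction j with
  | zero => exact subset_hull T S
  | succ j ih =>
    rw [Function.iterate_succ_apply']
    exact (p3_mono T ih).trans (hull_closed T S)

lemma exists_iter_eq_hull [Fintype V] (S : Set V) :
    ∃ N, (p3Interval T)^[N] S = convexHullOf (p3Interval T) S := by
  have key : ∃ N, (p3Interval T)^[N+1] S = (p3Interval T)^[N] S := by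
    by_contra h
    push_neg at h
    have grow : ∀ j : ℕ, j ≤ ((p3Interval T)^[j] S).ncard := by
      intro j
      induction j with
      | zero => exact Nat.zero_le _
      | succ j ih =>
        have hss : (p3Interval T)^[j] S ⊂ (p3Interval T)^[j+1] S :=
          HasSubset.Subset.ssubset_of_ne (iter_le_iter T (Nat.le_succ j) S) (Ne.symm (h j))
        have := Set.ncard_lt_ncard hss (Set.toFinite _)
        omega
    have h1 := grow (Fintype.card V + 1)
    have h2 : ((p3Interval T)^[Fintype.card V + 1] S).ncard ≤ Fintype.card V := by
      have := Set.ncard_le_ncard (Set.subset_univ ((p3Interval T)^[Fintype.card V + 1] S))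
        (Set.toFinite _)
      simpa [Set.ncard_univ, Nat.card_eq_fintype_card] using this
    omega
  obtain ⟨N, hN⟩ := key
  refine ⟨N, le_antisymm (iter_subset_hull T S N) ?_⟩
  have hclosed : p3Interval T ((p3Interval T)^[N] S) ⊆ (p3Interval T)^[N] S := by
    rw [← Function.iterate_succ_apply' (p3Interval T) N S]
    exact hN.le
  have hsub : S ⊆ (p3Interval T)^[N] S := iter_le_iter T (Nat.zero_le N) S
  exact Set.sInter_subset_of_mem ⟨hsub, hclosed⟩

lemma le_iterTimeSet [Fintype V] {S : Set V} {k : ℕ}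
    (h : (p3Interval T)^[k-1] S ≠ convexHullOf (p3Interval T) S) :
    k ≤ iterTimeSet (p3Interval T) S := by
  refine le_csInf ⟨_, (exists_iter_eq_hull T S).choose_spec⟩ ?_
  intro b hb
  by_contra hbk
  push_neg at hbk
  have hble : b ≤ k - 1 := by omega
  have h1 : (p3Interval T)^[b] S ⊆ (p3Interval T)^[k-1] S := iter_le_iter T hble S
  have h2 := iter_subset_hull T S (k-1)
  exact h (le_antisymm h2 (hb ▸ h1))

lemma le_iterTime [Fintype V] {S : Set V} {k : ℕ}
    (h : k ≤ iterTimeSet (p3Interval T) S) : k ≤ iterTime (p3Interval T) := by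
  refine h.trans (le_ciSup ?_ S)
  exact Set.Finite.bddAbove (Set.finite_range _)

end Hull

section Level
variable {V : Type*} [Fintype V] [DecidableEq V] (T : SimpleGraph V) [DecidableRel T.Adj]

lemma subset_p3' (S : Set V) : S ⊆ p3Interval T S := Set.subset_union_left

lemma two_le_degree {x a b : V} (hab : a ≠ b) (h1 : T.Adj x a) (h2 : T.Adj x b) :
    2 ≤ T.degree x := by
  have hsub : ({a, b} : Finset V) ⊆ T.neighborFinset x := by
    intro y hy
    simp only [Finset.mem_insert, Finset.mem_singleton] at hy
    rcases hy with rfl | rfl <;> simp [SimpleGraph.mem_neighborFinset, h1, h2]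
  calc 2 = ({a, b} : Finset V).card := (Finset.card_pair hab).symm
    _ ≤ _ := Finset.card_le_card hsub

lemma three_le_degree {x a b c : V} (hab : a ≠ b) (hac : a ≠ c) (hbc : b ≠ c)
    (h1 : T.Adj x a) (h2 : T.Adj x b) (h3 : T.Adj x c) : 3 ≤ T.degree x := by
  have hsub : ({a, b, c} : Finset V) ⊆ T.neighborFinset x := by
    intro y hy
    simp only [Finset.mem_insert, Finset.mem_singleton] at hy
    rcases hy with rfl | rfl | rfl <;> simp [SimpleGraph.mem_neighborFinset, h1, h2, h3]
  have hcard : ({a, b, c} : Finset V).card = 3 := by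
    rw [Finset.card_insert_of_notMem (by simp [hab, hac]),
      Finset.card_insert_of_notMem (by simp [hbc]), Finset.card_singleton]
  calc 3 = ({a, b, c} : Finset V).card := hcard.symm
    _ ≤ _ := Finset.card_le_card hsub

lemma mem_p3_elim {S : Set V} {x : V} (hx : x ∈ p3Interval T S) :
    x ∈ S ∨ ∃ a ∈ S, ∃ b ∈ S, a ≠ b ∧ T.Adj x a ∧ T.Adj x b := hx

lemma level_chain :
    ∀ t : ℕ, 1 ≤ t → ∀ S : Set V, ∀ x : V, x ∈ (p3Interval T)^[t] S →
      x ∉ (p3Interval T)^[t-1] S →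
    ∃ u : ℕ → V, u t = x ∧
      (∀ i, 1 ≤ i → i ≤ t → u i ∈ (p3Interval T)^[i] S ∧ u i ∉ (p3Interval T)^[i-1] S) ∧
      (∀ i, 1 ≤ i → i < t → T.Adj (u i) (u (i+1))) ∧
      (∀ i, 1 ≤ i → i < t → 3 ≤ T.degree (u i)) ∧ 2 ≤ T.degree (u t) := by
  intro t
  induction t with
  | zero => omega
  | succ t ih =>
    intro _ S x hx hx'
    simp only [Nat.add_sub_cancel] at hx'
    rw [Function.iterate_succ_apply'] at hx
    rcases mem_p3_elim T hx with h | ⟨a, ha, b, hb, hab, hxa, hxb⟩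
    · exact absurd h hx'
    rcases Nat.eq_zero_or_pos t with rfl | ht
    · refine ⟨fun _ => x, rfl, ?_, by omega, by omega, two_le_degree T hab hxa hxb⟩
      intro i h1 h2
      have : i = 1 := by omega
      subst this
      simpa [Function.iterate_succ_apply'] using ⟨hx, hx'⟩
    · -- t ≥ 1
      have ht1 : t = t - 1 + 1 := by omega
      have hiter : (p3Interval T)^[t] S = p3Interval T ((p3Interval T)^[t-1] S) := by
        conv_lhs => rw [ht1]
        rw [Function.iterate_succ_apply']
      have key : ∃ a' b', a' ≠ b' ∧ T.Adj x a' ∧ T.Adj x b' ∧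
          a' ∈ (p3Interval T)^[t] S ∧ a' ∉ (p3Interval T)^[t-1] S := by
        by_cases haS : a ∈ (p3Interval T)^[t-1] S
        · by_cases hbS : b ∈ (p3Interval T)^[t-1] S
          · exact absurd (hiter ▸ (Or.inr ⟨a, haS, b, hbS, hab, hxa, hxb⟩ :
              x ∈ p3Interval T ((p3Interval T)^[t-1] S))) hx'
          · exact ⟨b, a, hab.symm, hxb, hxa, hb, hbS⟩
        · exact ⟨a, b, hab, hxa, hxb, ha, haS⟩
      obtain ⟨a', b', hab', hxa', hxb', ha't, ha'nt⟩ := key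
      obtain ⟨u, hut, humem, huadj, hudeg, _⟩ := ih ht S a' ha't ha'nt
      have ha'top : a' ∈ p3Interval T ((p3Interval T)^[t-1] S) := hiter ▸ ha't
      rcases mem_p3_elim T ha'top with h | ⟨c, hc, d, hd, hcd, hac, had⟩
      · exact absurd h ha'nt
      have hxnt : x ∉ (p3Interval T)^[t] S := hx'
      have hxc : x ≠ c := by
        rintro rfl
        exact hxnt (hiter ▸ subset_p3' T _ hc)
      have hxd : x ≠ d := by
        rintro rfl
        exact hxnt (hiter ▸ subset_p3' T _ hd)
      have hdeg3 : 3 ≤ T.degree a' :=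
        three_le_degree T hcd (Ne.symm hxc) (Ne.symm hxd) hac had hxa'.symm
      refine ⟨fun i => if i = t+1 then x else u i, by simp, ?_, ?_, ?_, ?_⟩
      · intro i h1 h2
        beta_reduce
        by_cases hi : i = t + 1
        · have e : (if i = t+1 then x else u i) = x := if_pos hi
          rw [e, hi]
          refine ⟨?_, by simpa using hx'⟩
          rw [Function.iterate_succ_apply']
          exact hx
        · have hile : i ≤ t := by omega
          simp only [if_neg hi]
          exact humem i h1 hile
      · intro i h1 h2
        beta_reduce
        by_cases hi : i = t
        · have e1 : (if i = t+1 then x else u i) = a' := by rw [if_neg (by omega), hi, hut]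
          have e2 : (if i+1 = t+1 then x else u (i+1)) = x := if_pos (by omega)
          rw [e1, e2]
          exact hxa'.symm
        · simp only [if_neg (show ¬ i = t+1 by omega), if_neg (show ¬ i+1 = t+1 by omega)]
          exact huadj i h1 (by omega)
      · intro i h1 h2
        beta_reduce
        by_cases hi : i = t
        · have e1 : (if i = t+1 then x else u i) = a' := by rw [if_neg (by omega), hi, hut]
          rw [e1]
          exact hdeg3
        · rw [if_neg (show ¬ i = t+1 by omega)]
          exact hudeg i h1 (by omega)
      · beta_reduce
        rw [if_pos rfl]
        exact two_le_degree T hab hxa hxb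
end Level

section Tree
variable {V : Type*}

def chainWalk (T : SimpleGraph V) (v : ℕ → V) (k : ℕ)
    (hadj : ∀ i, i + 1 < k → T.Adj (v i) (v (i + 1))) :
    (d : ℕ) → (i : ℕ) → i + d < k → T.Walk (v i) (v (i + d))
  | 0, _, _ => SimpleGraph.Walk.nil
  | d + 1, i, h =>
    SimpleGraph.Walk.cons (hadj i (by omega))
      ((chainWalk T v k hadj d (i + 1) (by omega)).copy rfl (by congr 1; omega))

lemma chainWalk_length (T : SimpleGraph V) (v : ℕ → V) (k : ℕ)
    (hadj : ∀ i, i + 1 < k → T.Adj (v i) (v (i + 1))) :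
    ∀ (d i : ℕ) (h : i + d < k), (chainWalk T v k hadj d i h).length = d := by
  intro d
  induction d with
  | zero => intro i h; rfl
  | succ d ih =>
    intro i h
    simp [chainWalk, SimpleGraph.Walk.length_copy, ih (i+1)]

lemma chainWalk_support (T : SimpleGraph V) (v : ℕ → V) (k : ℕ)
    (hadj : ∀ i, i + 1 < k → T.Adj (v i) (v (i + 1))) :
    ∀ (d i : ℕ) (h : i + d < k),
      (chainWalk T v k hadj d i h).support = (List.range (d + 1)).map (fun t => v (i + t)) := by
  intro d
  induction d with
  | zero => intro i h; rw [chainWalk]; rw [show List.range 1 = [0] from rfl]; simp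
  | succ d ih =>
    intro i h
    rw [chainWalk]
    rw [SimpleGraph.Walk.support_cons, SimpleGraph.Walk.support_copy, ih (i+1) (by omega)]
    conv_rhs => rw [List.range_succ_eq_map, List.map_cons, List.map_map]
    congr 1
    apply List.map_congr_left
    intro t _
    simp only [Function.comp_apply]
    congr 1
    omega

lemma chainWalk_isPath (T : SimpleGraph V) (v : ℕ → V) (k : ℕ)
    (hinj : ∀ i j, i < k → j < k → v i = v j → i = j)
    (hadj : ∀ i, i + 1 < k → T.Adj (v i) (v (i + 1)))
    (d i : ℕ) (h : i + d < k) : (chainWalk T v k hadj d i h).IsPath := by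
  rw [SimpleGraph.Walk.isPath_def, chainWalk_support]
  refine List.Nodup.map_on ?_ List.nodup_range
  intro t1 h1 t2 h2 he
  rw [List.mem_range] at h1 h2
  have := hinj (i + t1) (i + t2) (by omega) (by omega) he
  omega

/-- E2: any path between `v i` and `v j` in the tree is the canonical one. -/
lemma tree_path_spec (T : SimpleGraph V) (hT : T.IsTree) (v : ℕ → V) (k : ℕ)
    (hinj : ∀ i j, i < k → j < k → v i = v j → i = j)
    (hadj : ∀ i, i + 1 < k → T.Adj (v i) (v (i + 1)))
    {i j : ℕ} (hij : i ≤ j) (hj : j < k)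
    (p : T.Walk (v i) (v j)) (hp : p.IsPath) :
    p.length = j - i ∧ p.support = (List.range (j - i + 1)).map (fun t => v (i + t)) := by
  have hik : i + (j - i) < k := by omega
  have hvj : v (i + (j - i)) = v j := by congr 1; omega
  set W : T.Walk (v i) (v j) :=
    (chainWalk T v k hadj (j - i) i hik).copy rfl hvj with hW
  have hWpath : W.IsPath := (SimpleGraph.Walk.isPath_copy _ rfl hvj).mpr (chainWalk_isPath T v k hinj hadj (j-i) i hik)
  have : p = W := (hT.existsUnique_path (v i) (v j)).unique hp hWpath
  subst this
  constructor
  · rw [hW, SimpleGraph.Walk.length_copy, chainWalk_length]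
  · rw [hW, SimpleGraph.Walk.support_copy, chainWalk_support]
end Tree

section Derived
variable {V : Type*} {T : SimpleGraph V} {v : ℕ → V} {k : ℕ}
variable (hT : T.IsTree)
variable (hinj : ∀ i j, i < k → j < k → v i = v j → i = j)
variable (hadj : ∀ i, i + 1 < k → T.Adj (v i) (v (i + 1)))
include hT hinj hadj

/-- T1: adjacency between path vertices only for consecutive indices. -/
lemma adj_consec {i j : ℕ} (hi : i < k) (hj : j < k) (h : T.Adj (v i) (v j)) :
    j = i + 1 ∨ i = j + 1 := by
  have hne : i ≠ j := fun he => T.irrefl (he ▸ h)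
  rcases Nat.lt_or_ge i j with hij | hij
  · left
    have hp : (SimpleGraph.Walk.cons h .nil).IsPath := by
      simp [SimpleGraph.Walk.isPath_def, h.ne]
    have := (tree_path_spec T hT v k hinj hadj (Nat.le_of_lt hij) hj _ hp).1
    simp [SimpleGraph.Walk.length_cons] at this
    omega
  · right
    have hij' : j < i := by omega
    have hp : (SimpleGraph.Walk.cons h.symm .nil).IsPath := by
      simp [SimpleGraph.Walk.isPath_def, h.ne']
    have := (tree_path_spec T hT v k hinj hadj (Nat.le_of_lt hij') hi _ hp).1
    simp [SimpleGraph.Walk.length_cons] at this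
    omega

/-- CN: common neighbor of two path vertices. -/
lemma common_nbr {i j : ℕ} (hi : i < k) (hj : j < k) (hij : i < j) {x : V}
    (h1 : T.Adj x (v i)) (h2 : T.Adj x (v j)) : j = i + 2 ∧ x = v (i + 1) := by
  have hvij : v i ≠ v j := fun he => by have := hinj i j hi hj he; omega
  have hp : (SimpleGraph.Walk.cons h1.symm (SimpleGraph.Walk.cons h2 .nil)).IsPath := by
    simp [SimpleGraph.Walk.isPath_def, h1.ne, h1.ne', h2.ne, hvij]
  obtain ⟨hlen, hsupp⟩ := tree_path_spec T hT v k hinj hadj (Nat.le_of_lt hij) hj _ hp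
  simp [SimpleGraph.Walk.length_cons] at hlen
  have hji : j = i + 2 := by omega
  refine ⟨hji, ?_⟩
  rw [SimpleGraph.Walk.support_cons, SimpleGraph.Walk.support_cons,
    SimpleGraph.Walk.support_nil] at hsupp
  rw [show j - i = 2 by omega, show List.range 3 = [0, 1, 2] from rfl] at hsupp
  simp at hsupp
  exact hsupp.1

/-- P3: a vertex outside the path range cannot be adjacent to two distinct path vertices. -/
lemma pendant_unique {i j : ℕ} (hi : i < k) (hj : j < k) (hij : i ≠ j) {y : V}
    (hy : ∀ m, m < k → y ≠ v m)
    (h1 : T.Adj y (v i)) (h2 : T.Adj y (v j)) : False := by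
  rcases Nat.lt_or_ge i j with h | h
  · obtain ⟨hj2, he⟩ := common_nbr hT hinj hadj hi hj h h1 h2
    exact hy (i+1) (by omega) he
  · obtain ⟨hj2, he⟩ := common_nbr hT hinj hadj hj hi (by omega) h2 h1
    exact hy (j+1) (by omega) he

/-- P1: configuration `v i — y — x — v j` with `y` outside the range is impossible. -/
lemma pendant_step {i j : ℕ} (hi : i < k) (hj : j < k) {x y : V}
    (hy : ∀ m, m < k → y ≠ v m)
    (hyi : T.Adj (v i) y) (hxy : T.Adj x y) (hxj : T.Adj x (v j))
    (hxvi : x ≠ v i) : False := by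
  rcases Nat.lt_trichotomy i j with h | h | h
  · -- path [v i, y, x, v j]
    have hvij : v i ≠ v j := fun he => by have := hinj i j hi hj he; omega
    set p : T.Walk (v i) (v j) :=
      SimpleGraph.Walk.cons hyi (SimpleGraph.Walk.cons hxy.symm
        (SimpleGraph.Walk.cons hxj .nil)) with hp
    have hppath : p.IsPath := by
      simp [hp, SimpleGraph.Walk.isPath_def, hyi.ne', hxy.ne', hxj.ne, hvij,
        Ne.symm hxvi, hy j hj, Ne.symm (hy i hi)]
    obtain ⟨hlen, hsupp⟩ := tree_path_spec T hT v k hinj hadj (Nat.le_of_lt h) hj _ hppath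
    simp [hp, SimpleGraph.Walk.length_cons] at hlen
    rw [hp, SimpleGraph.Walk.support_cons, SimpleGraph.Walk.support_cons,
      SimpleGraph.Walk.support_cons, SimpleGraph.Walk.support_nil,
      show j - i = 3 by omega, show List.range 4 = [0,1,2,3] from rfl] at hsupp
    simp at hsupp
    exact hy (i+1) (by omega) hsupp.1
  · -- i = j : two distinct paths from y to v i
    subst h
    have hp1 : (SimpleGraph.Walk.cons hyi.symm .nil : T.Walk y (v i)).IsPath := by
      simp [SimpleGraph.Walk.isPath_def, hyi.ne, hy i hi]
    have hp2 : (SimpleGraph.Walk.cons hxy.symm (SimpleGraph.Walk.cons hxj .nil) :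
        T.Walk y (v i)).IsPath := by
      simp [SimpleGraph.Walk.isPath_def, hxy.ne, hxy.ne', hxj.ne, hy i hi, hxvi]
    have := (hT.existsUnique_path y (v i)).unique hp1 hp2
    have hlen := congrArg SimpleGraph.Walk.length this
    simp [SimpleGraph.Walk.length_cons] at hlen
  · -- path [v j, x, y, v i]
    have hvij : v j ≠ v i := fun he => by have := hinj j i hj hi he; omega
    set p : T.Walk (v j) (v i) :=
      SimpleGraph.Walk.cons hxj.symm (SimpleGraph.Walk.cons hxy
        (SimpleGraph.Walk.cons hyi.symm .nil)) with hp
    have hppath : p.IsPath := by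
      simp [hp, SimpleGraph.Walk.isPath_def, hxj.ne, hxj.ne', hxy.ne, hxy.ne', hyi.ne, hyi.ne', hvij,
        hxvi, Ne.symm hxvi, Ne.symm (hy j hj), hy j hj, hy i hi, Ne.symm (hy i hi)]
    obtain ⟨hlen, hsupp⟩ := tree_path_spec T hT v k hinj hadj (Nat.le_of_lt h) hi _ hppath
    simp [hp, SimpleGraph.Walk.length_cons] at hlen
    rw [hp, SimpleGraph.Walk.support_cons, SimpleGraph.Walk.support_cons,
      SimpleGraph.Walk.support_cons, SimpleGraph.Walk.support_nil,
      show i - j = 3 by omega, show List.range 4 = [0,1,2,3] from rfl] at hsupp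
    simp at hsupp
    exact hy (j+2) (by omega) hsupp.2.1

/-- P2 auxiliary: configuration `v i — y — x — z — v j` with `i < j` impossible. -/
lemma pendant_pair_aux {i j : ℕ} (hi : i < k) (hj : j < k) (hij : i < j) {x y z : V}
    (hy : ∀ m, m < k → y ≠ v m) (hz : ∀ m, m < k → z ≠ v m) (hyz : y ≠ z)
    (hyi : T.Adj (v i) y) (hzj : T.Adj (v j) z)
    (hxy : T.Adj x y) (hxz : T.Adj x z)
    (hxvi : x ≠ v i) (hxvj : x ≠ v j) : False := by
  have hvij : v i ≠ v j := fun he => by have := hinj i j hi hj he; omega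
  set p : T.Walk (v i) (v j) :=
    SimpleGraph.Walk.cons hyi (SimpleGraph.Walk.cons hxy.symm
      (SimpleGraph.Walk.cons hxz (SimpleGraph.Walk.cons hzj.symm .nil))) with hp
  have hppath : p.IsPath := by
    simp [hp, SimpleGraph.Walk.isPath_def, hyi.ne', hxy.ne', hxz.ne, hzj.ne, hvij,
      Ne.symm hxvi, hxvj, hyz, hy j hj, Ne.symm (hy i hi), hz i hi, hz j hj,
      Ne.symm (hz i hi)]
  obtain ⟨hlen, hsupp⟩ := tree_path_spec T hT v k hinj hadj (Nat.le_of_lt hij) hj _ hppath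
  simp [hp, SimpleGraph.Walk.length_cons] at hlen
  rw [hp, SimpleGraph.Walk.support_cons, SimpleGraph.Walk.support_cons,
    SimpleGraph.Walk.support_cons, SimpleGraph.Walk.support_cons,
    SimpleGraph.Walk.support_nil,
    show j - i = 4 by omega, show List.range 5 = [0,1,2,3,4] from rfl] at hsupp
  simp at hsupp
  exact hy (i+1) (by omega) hsupp.1

/-- P2: two distinct pendants with a common neighbor `x` outside `{v i, v j}`: impossible. -/
lemma pendant_pair {i j : ℕ} (hi : i < k) (hj : j < k) {x y z : V}
    (hy : ∀ m, m < k → y ≠ v m) (hz : ∀ m, m < k → z ≠ v m) (hyz : y ≠ z)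
    (hyi : T.Adj (v i) y) (hzj : T.Adj (v j) z)
    (hxy : T.Adj x y) (hxz : T.Adj x z)
    (hxvi : x ≠ v i) (hxvj : x ≠ v j) : False := by
  rcases Nat.lt_trichotomy i j with h | h | h
  · exact pendant_pair_aux hT hinj hadj hi hj h hy hz hyz hyi hzj hxy hxz hxvi hxvj
  · -- i = j : two distinct paths from y to z
    subst h
    have hp1 : (SimpleGraph.Walk.cons hyi.symm (SimpleGraph.Walk.cons hzj .nil) :
        T.Walk y z).IsPath := by
      simp [SimpleGraph.Walk.isPath_def, hyi.ne, hy i hi, Ne.symm (hz i hi), hzj.ne, hzj.ne', hyz]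
    have hp2 : (SimpleGraph.Walk.cons hxy.symm (SimpleGraph.Walk.cons hxz .nil) :
        T.Walk y z).IsPath := by
      simp [SimpleGraph.Walk.isPath_def, hxy.ne, hxy.ne', hxz.ne, hxz.ne', hyz]
    have heq := (hT.existsUnique_path y z).unique hp1 hp2
    have hsupp := congrArg SimpleGraph.Walk.support heq
    simp [SimpleGraph.Walk.support_cons] at hsupp
    exact hxvi hsupp.symm
  · exact pendant_pair_aux hT hinj hadj hj hi h hz hy (Ne.symm hyz) hzj hyi hxz hxy hxvj hxvi
end Derived

section Construction
variable {V : Type*} [Fintype V] [DecidableEq V] (T : SimpleGraph V) [DecidableRel T.Adj]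

lemma exists_two_nbrs {x : V} (h : 2 ≤ T.degree x) :
    ∃ a b, a ≠ b ∧ T.Adj x a ∧ T.Adj x b := by
  obtain ⟨a, ha, b, hb, hab⟩ := Finset.one_lt_card.mp
    (by rw [SimpleGraph.card_neighborFinset_eq_degree]; omega :
      1 < (T.neighborFinset x).card)
  rw [SimpleGraph.mem_neighborFinset] at ha hb
  exact ⟨a, b, hab, ha, hb⟩

lemma exists_nbr_avoid1 {x : V} (h : 2 ≤ T.degree x) (e : V) :
    ∃ a, T.Adj x a ∧ a ≠ e := by
  have h1 : (T.neighborFinset x).card ≤ (T.neighborFinset x \ {e}).card + ({e} : Finset V).card :=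
    Finset.card_le_card_sdiff_add_card
  rw [SimpleGraph.card_neighborFinset_eq_degree, Finset.card_singleton] at h1
  obtain ⟨a, ha⟩ := Finset.card_pos.mp (by omega : 0 < (T.neighborFinset x \ {e}).card)
  rw [Finset.mem_sdiff, SimpleGraph.mem_neighborFinset, Finset.mem_singleton] at ha
  exact ⟨a, ha.1, ha.2⟩

lemma exists_nbr_avoid2 {x : V} (h : 3 ≤ T.degree x) (e f : V) :
    ∃ a, T.Adj x a ∧ a ≠ e ∧ a ≠ f := by
  have h1 : (T.neighborFinset x).card ≤
      (T.neighborFinset x \ {e, f}).card + ({e, f} : Finset V).card :=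
    Finset.card_le_card_sdiff_add_card
  have h2 : ({e, f} : Finset V).card ≤ 2 := by
    refine (Finset.card_insert_le e {f}).trans ?_
    rw [Finset.card_singleton]
  rw [SimpleGraph.card_neighborFinset_eq_degree] at h1
  obtain ⟨a, ha⟩ := Finset.card_pos.mp (by omega : 0 < (T.neighborFinset x \ {e, f}).card)
  rw [Finset.mem_sdiff, SimpleGraph.mem_neighborFinset] at ha
  have := ha.2
  simp only [Finset.mem_insert, Finset.mem_singleton, not_or] at this
  exact ⟨a, ha.1, this.1, this.2⟩

lemma construction (hT : T.IsTree) (k : ℕ) (hk : 1 ≤ k) (v : ℕ → V)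
    (hinj : ∀ i j, i < k → j < k → v i = v j → i = j)
    (hadjv : ∀ i, i + 1 < k → T.Adj (v i) (v (i + 1)))
    (hdeg3 : ∀ i, i + 1 < k → 3 ≤ T.degree (v i))
    (hdeg2 : 2 ≤ T.degree (v (k - 1))) :
    k ≤ iterTime (p3Interval T) := by
  by_cases hk1 : k = 1
  · subst hk1
    rw [show (1:ℕ) - 1 = 0 from rfl] at hdeg2
    obtain ⟨a, b, hab, ha, hb⟩ := exists_two_nbrs T hdeg2
    set S : Set V := {a, b} with hS
    have hva : v 0 ∈ convexHullOf (p3Interval T) S := by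
      apply hull_closed T S
      exact Or.inr ⟨a, subset_hull T S (by simp [hS]), b, subset_hull T S (by simp [hS]),
        hab, ha, hb⟩
    have hnot : v 0 ∉ S := by
      intro hmem
      rcases hmem with h | h
      · exact ha.ne' h.symm
      · exact hb.ne' h.symm
    have hne : (p3Interval T)^[1-1] S ≠ convexHullOf (p3Interval T) S := by
      rw [show (1:ℕ) - 1 = 0 from rfl]
      simp only [Function.iterate_zero, id_eq]
      intro he
      exact hnot (he.symm ▸ hva)
    exact le_iterTime T (le_iterTimeSet T hne)
  · have hk2 : 2 ≤ k := by omega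
    -- pendant choices
    have hex : ∀ i, ∃ a, (i + 1 < k → T.Adj (v i) a ∧ a ≠ v (i-1) ∧ a ≠ v (i+1)) ∧
        (i = k - 1 → T.Adj (v i) a ∧ a ≠ v (k-2)) := by
      intro i
      by_cases h1 : i + 1 < k
      · obtain ⟨a, ha1, ha2, ha3⟩ := exists_nbr_avoid2 T (hdeg3 i h1) (v (i-1)) (v (i+1))
        exact ⟨a, fun _ => ⟨ha1, ha2, ha3⟩, fun h2 => by omega⟩
      · by_cases h2 : i = k - 1
        · subst h2
          obtain ⟨a, ha1, ha2⟩ := exists_nbr_avoid1 T hdeg2 (v (k-2))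
          exact ⟨a, fun h => by omega, fun _ => ⟨ha1, ha2⟩⟩
        · exact ⟨v 0, fun h => by omega, fun h => by omega⟩
    choose u hu1 hu2 using hex
    have huadj : ∀ i, i < k → T.Adj (v i) (u i) := by
      intro i hi
      by_cases h1 : i + 1 < k
      · exact (hu1 i h1).1
      · exact (hu2 i (by omega)).1
    have hunotv : ∀ i, i < k → ∀ m, m < k → u i ≠ v m := by
      intro i hi m hm he
      have hadj' : T.Adj (v i) (v m) := he ▸ huadj i hi
      rcases adj_consec hT hinj hadjv hi hm hadj' with h | h
      · by_cases h1 : i + 1 < k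
        · exact (hu1 i h1).2.2 (by rw [← h]; exact he)
        · omega
      · by_cases h1 : i + 1 < k
        · exact (hu1 i h1).2.1 (by rw [show i - 1 = m by omega]; exact he)
        · have h2 : i = k - 1 := by omega
          exact (hu2 i h2).2 (by rw [show k - 2 = m by omega]; exact he)
    obtain ⟨q, hq1, hq2, hq3⟩ := exists_nbr_avoid2 T (hdeg3 0 (by omega)) (v 1) (u 0)
    have hqnotv : ∀ m, m < k → q ≠ v m := by
      intro m hm he
      have hadj' : T.Adj (v 0) (v m) := he ▸ hq1
      rcases adj_consec hT hinj hadjv (by omega) hm hadj' with h | h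
      · exact hq2 (by rw [show (1:ℕ) = m by omega]; exact he)
      · omega
    set S : Set V := {x : V | x = q ∨ ∃ i, i < k ∧ x = u i} with hSdef
    have hqS : q ∈ S := Or.inl rfl
    have huS : ∀ i, i < k → u i ∈ S := fun i hi => Or.inr ⟨i, hi, rfl⟩
    have hSnotv : ∀ c ∈ S, ∀ m, m < k → c ≠ v m := by
      rintro c (rfl | ⟨i, hi, rfl⟩) m hm
      · exact hqnotv m hm
      · exact hunotv i hi m hm
    have hSadj : ∀ c ∈ S, ∃ i, i < k ∧ T.Adj (v i) c := by
      rintro c (rfl | ⟨i, hi, rfl⟩)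
      · exact ⟨0, by omega, hq1⟩
      · exact ⟨i, hi, huadj i hi⟩
    have hattach : ∀ c ∈ S, ∀ t, t < k → T.Adj (v t) c → ((c = q ∧ t = 0) ∨ c = u t) := by
      rintro c (rfl | ⟨i, hi, rfl⟩) t ht hadj'
      · left
        refine ⟨rfl, ?_⟩
        by_contra h0
        exact pendant_unique hT hinj hadjv (by omega : (0:ℕ) < k) ht
          (fun h => h0 h.symm) hqnotv hq1.symm hadj'.symm
      · by_cases hti : t = i
        · exact Or.inr (by rw [hti])
        · exact (pendant_unique hT hinj hadjv hi ht
            (fun h => hti h.symm) (hunotv i hi) (huadj i hi).symm hadj'.symm).elim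
    have hsame : ∀ a ∈ S, ∀ b ∈ S, a ≠ b → ∀ t, t < k →
        T.Adj (v t) a → T.Adj (v t) b → t = 0 := by
      intro a haS b hbS hab t ht ha hb
      rcases hattach a haS t ht ha with ⟨_, h0⟩ | ha'
      · exact h0
      rcases hattach b hbS t ht hb with ⟨_, h0⟩ | hb'
      · exact h0
      · exact absurd (ha'.trans hb'.symm) hab
    -- the level invariant
    have hinv : ∀ j, (p3Interval T)^[j] S ⊆
        {x | x ∈ S ∨ ∃ m, m < k ∧ m < j ∧ x = v m} := by
      intro j
      induction j with
      | zero => intro x hx; exact Or.inl hx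
      | succ j ih =>
        have mixed : ∀ a b x : V, a ∈ S → (∃ m, m < k ∧ m < j ∧ b = v m) →
            T.Adj x a → T.Adj x b →
            x ∈ S ∨ ∃ m, m < k ∧ m < j + 1 ∧ x = v m := by
          rintro a b x haS ⟨m1, hm1k, hm1j, rfl⟩ hxa hxb
          obtain ⟨ia, hiak, haadj⟩ := hSadj a haS
          by_cases hx_eq : x = v ia
          · have hadj' : T.Adj (v ia) (v m1) := hx_eq ▸ hxb
            have := adj_consec hT hinj hadjv hiak hm1k hadj'
            exact Or.inr ⟨ia, hiak, by omega, hx_eq⟩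
          · exact (pendant_step hT hinj hadjv hiak hm1k (hSnotv a haS)
              haadj hxa hxb hx_eq).elim
        intro x hx
        rw [Function.iterate_succ_apply'] at hx
        rcases hx with hx | ⟨a, ha, b, hb, hab, hxa, hxb⟩
        · rcases ih hx with h | ⟨m, h1, h2, h3⟩
          · exact Or.inl h
          · exact Or.inr ⟨m, h1, by omega, h3⟩
        · rcases ih ha with hSa | hva
          · rcases ih hb with hSb | hvb
            · -- both in S
              obtain ⟨ia, hiak, haadj⟩ := hSadj a hSa
              obtain ⟨ib, hibk, hbadj⟩ := hSadj b hSb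
              by_cases hx_eq : x = v ia
              · have h0 : ia = 0 := hsame a hSa b hSb hab ia hiak
                  (hx_eq ▸ hxa) (hx_eq ▸ hxb)
                exact Or.inr ⟨ia, hiak, by omega, hx_eq⟩
              · by_cases hx_eq' : x = v ib
                · have h0 : ib = 0 := hsame a hSa b hSb hab ib hibk
                    (hx_eq' ▸ hxa) (hx_eq' ▸ hxb)
                  exact Or.inr ⟨ib, hibk, by omega, hx_eq'⟩
                · exact (pendant_pair hT hinj hadjv hiak hibk (hSnotv a hSa)
                    (hSnotv b hSb) hab haadj hbadj hxa hxb hx_eq hx_eq').elim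
            · exact mixed a b x hSa hvb hxa hxb
          · rcases ih hb with hSb | hvb
            · exact mixed b a x hSb hva hxb hxa
            · -- both path vertices
              obtain ⟨m1, hm1k, hm1j, rfl⟩ := hva
              obtain ⟨m2, hm2k, hm2j, rfl⟩ := hvb
              have hm12 : m1 ≠ m2 := fun h => hab (by rw [h])
              rcases Nat.lt_or_ge m1 m2 with h | h
              · obtain ⟨h2, hxe⟩ := common_nbr hT hinj hadjv hm1k hm2k h hxa hxb
                exact Or.inr ⟨m1 + 1, by omega, by omega, hxe⟩
              · obtain ⟨h2, hxe⟩ := common_nbr hT hinj hadjv hm2k hm1k (by omega) hxb hxa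
                exact Or.inr ⟨m2 + 1, by omega, by omega, hxe⟩
    -- path vertices are in the hull
    have hhull : ∀ m, m < k → v m ∈ convexHullOf (p3Interval T) S := by
      intro m
      induction m with
      | zero =>
        intro _
        apply hull_closed T S
        exact Or.inr ⟨u 0, subset_hull T S (huS 0 (by omega)), q, subset_hull T S hqS,
          Ne.symm hq3, huadj 0 (by omega), hq1⟩
      | succ m ih =>
        intro hm
        apply hull_closed T S
        exact Or.inr ⟨v m, ih (by omega), u (m+1), subset_hull T S (huS (m+1) hm),
          Ne.symm (hunotv (m+1) hm m (by omega)), (hadjv m hm).symm, huadj (m+1) hm⟩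
    have hfin : (p3Interval T)^[k-1] S ≠ convexHullOf (p3Interval T) S := by
      intro he
      have hv : v (k-1) ∈ (p3Interval T)^[k-1] S := he.symm ▸ hhull (k-1) (by omega)
      rcases hinv (k-1) hv with hS | ⟨m, hmk, hmj, hme⟩
      · exact hSnotv _ hS (k-1) (by omega) rfl
      · have := hinj (k-1) m (by omega) hmk hme
        omega
    exact le_iterTime T (le_iterTimeSet T hfin)
end Construction



/-- for a tree `T` and `k ≥ 1`, the P3 iteration time of `T` is at least `k`
iff `T` has a path `v 0, …, v (k-1)` whose first `k-1` vertices have degree at least 3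
and whose last vertex has degree at least 2. -/
theorem stmt8 {V : Type*} [Fintype V] [DecidableEq V] (T : SimpleGraph V)
    [DecidableRel T.Adj] (hT : T.IsTree) (k : ℕ) (hk : 1 ≤ k) :
    k ≤ iterTime (p3Interval T) ↔
      ∃ v : ℕ → V,
        (∀ i j, i < k → j < k → v i = v j → i = j) ∧
        (∀ i, i + 1 < k → T.Adj (v i) (v (i + 1))) ∧
        (∀ i, i + 1 < k → 3 ≤ T.degree (v i)) ∧
        2 ≤ T.degree (v (k - 1)) := by
  constructor
  · intro h
    have hex : ∃ S : Set V, k ≤ iterTimeSet (p3Interval T) S := by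
      by_contra hc
      push_neg at hc
      have hle : iterTime (p3Interval T) ≤ k - 1 := by
        refine ciSup_le fun S => ?_
        have := hc S
        omega
      omega
    obtain ⟨S, hS⟩ := hex
    have hne : {j | (p3Interval T)^[j] S = convexHullOf (p3Interval T) S}.Nonempty :=
      exists_iter_eq_hull T S
    have htmem : (p3Interval T)^[iterTimeSet (p3Interval T) S] S =
        convexHullOf (p3Interval T) S := Nat.sInf_mem hne
    have ht1 : (p3Interval T)^[iterTimeSet (p3Interval T) S - 1] S ≠
        convexHullOf (p3Interval T) S := by
      intro he
      have hmem : iterTimeSet (p3Interval T) S - 1 ∈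
          {j | (p3Interval T)^[j] S = convexHullOf (p3Interval T) S} := he
      have hle := Nat.sInf_le hmem
      have : iterTimeSet (p3Interval T) S ≤ iterTimeSet (p3Interval T) S - 1 := hle
      omega
    have hxex : ∃ x, x ∈ (p3Interval T)^[iterTimeSet (p3Interval T) S] S ∧
        x ∉ (p3Interval T)^[iterTimeSet (p3Interval T) S - 1] S := by
      by_contra hc
      push_neg at hc
      apply ht1
      apply Set.Subset.antisymm (iter_subset_hull T S _)
      rw [← htmem]
      intro x hx
      exact hc x hx
    obtain ⟨x, hx, hx'⟩ := hxex
    set t := iterTimeSet (p3Interval T) S with ht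
    have hkt : k ≤ t := hS
    obtain ⟨uu, hut, humem, huadj, hudeg3, hudeg2⟩ :=
      level_chain T t (by omega) S x hx hx'
    refine ⟨fun j => uu (t - k + 1 + j), ?_, ?_, ?_, ?_⟩
    · intro i j hi hj he
      beta_reduce at he
      rcases Nat.lt_trichotomy (t - k + 1 + i) (t - k + 1 + j) with hlt | heq | hgt
      · have h1 := (humem (t - k + 1 + i) (by omega) (by omega)).1
        have h2 := (humem (t - k + 1 + j) (by omega) (by omega)).2
        exact absurd (iter_le_iter T (by omega : t - k + 1 + i ≤ t - k + 1 + j - 1) S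
          (he ▸ h1)) h2
      · omega
      · have h1 := (humem (t - k + 1 + j) (by omega) (by omega)).1
        have h2 := (humem (t - k + 1 + i) (by omega) (by omega)).2
        exact absurd (iter_le_iter T (by omega : t - k + 1 + j ≤ t - k + 1 + i - 1) S
          (he ▸ h1)) h2
    · intro i hi
      exact huadj (t - k + 1 + i) (by omega) (by omega)
    · intro i hi
      exact hudeg3 (t - k + 1 + i) (by omega) (by omega)
    · show 2 ≤ T.degree (uu (t - k + 1 + (k - 1)))
      rw [show t - k + 1 + (k - 1) = t by omega]
      exact hudeg2
  · rintro ⟨v, h1, h2, h3, h4⟩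
    exact construction T hT k hk v h1 h2 h3 h4
end

section
/- For every integer n ≥ 5, the general position number of the wheel W_n (a cycle C_{n-1} plus a universal vertex) in the monophonic convexity equals 3. -/
/-- `S` is in general position in the monophonic convexity. -/
def monoGenPos {V : Type*} (G : SimpleGraph V) (S : Set V) : Prop :=
  ∀ x ∈ S, ∀ y ∈ S, ∀ z ∈ S, x ≠ y → z ≠ x → z ≠ y → z ∉ monoInterval G {x, y}

/-- The monophonic general position number: maximum size of a set in general
position in the monophonic convexity. -/
noncomputable def gpMono {V : Type*} [Fintype V] (G : SimpleGraph V) : ℕ :=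
  sSup {m | ∃ S : Set V, monoGenPos G S ∧ S.ncard = m}

/-- The wheel graph with hub `none` and rim the cycle on `ZMod m`. -/
def wheelGraph (m : ℕ) : SimpleGraph (Option (ZMod m)) :=
  SimpleGraph.fromRel (fun a b =>
    a = none ∨ ∃ i j : ZMod m, a = some i ∧ b = some j ∧ i + 1 = j)

open SimpleGraph

namespace WheelAux

variable {m : ℕ}

lemma wheel_adj_some {i j : ZMod m} :
    (wheelGraph m).Adj (some i) (some j) ↔ i ≠ j ∧ (i + 1 = j ∨ j + 1 = i) := by
  simp only [wheelGraph, SimpleGraph.fromRel_adj, ne_eq, Option.some.injEq,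
    reduceCtorEq, false_or, exists_and_left, exists_eq_left', exists_eq_left]

lemma wheel_adj_hub {j : ZMod m} : (wheelGraph m).Adj none (some j) := by
  simp [wheelGraph, SimpleGraph.fromRel_adj]

lemma cast_inj' [NeZero m] {a b : ℕ} (ha : a < m) (hb : b < m)
    (h : (a : ZMod m) = b) : a = b := by
  have := congrArg ZMod.val h
  rwa [ZMod.val_cast_of_lt ha, ZMod.val_cast_of_lt hb] at this

/-- An induced path between adjacent vertices is the edge itself. -/
lemma support_eq_of_adj {V : Type*} {G : SimpleGraph V} {x y : V} (hxy : G.Adj x y)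
    (p : G.Walk x y) (hp : IsInducedPathWalk G p) : p.support = [x, y] := by
  cases p with
  | nil => exact absurd rfl hxy.ne
  | @cons _ w _ h q =>
    obtain ⟨hpath, hind⟩ := hp
    have hadj : (Walk.cons h q).toSubgraph.Adj x y :=
      hind x (Walk.start_mem_support _) y (Walk.end_mem_support _) hxy
    rw [Walk.cons_isPath_iff] at hpath
    simp only [Walk.toSubgraph, Subgraph.sup_adj, subgraphOfAdj_adj] at hadj
    rcases hadj with he | he
    · have hw : w = y := by
        rcases Sym2.eq_iff.mp he with ⟨-, h2⟩ | ⟨h1, -⟩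
        · exact h2
        · exact absurd h1 hxy.ne
      subst hw
      have : q = Walk.nil := Walk.isPath_iff_eq_nil.mp hpath.1
      subst this; simp
    · exact absurd ((Walk.mem_verts_toSubgraph q).mp he.fst_mem) hpath.2

/-- A set whose elements are pairwise adjacent is in monophonic general position. -/
lemma monoGenPos_of_pairwise_adj {V : Type*} {G : SimpleGraph V} {S : Set V}
    (h : ∀ a ∈ S, ∀ b ∈ S, a ≠ b → G.Adj a b) : monoGenPos G S := by
  intro x hx y hy z hz hxy hzx hzy hmem
  obtain ⟨a, ha, b, hb, p, hp, hzp⟩ := hmem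
  simp only [Set.mem_insert_iff, Set.mem_singleton_iff] at ha hb
  have haS : a ∈ S := by rcases ha with rfl | rfl; exacts [hx, hy]
  have hbS : b ∈ S := by rcases hb with rfl | rfl; exacts [hx, hy]
  by_cases hab : a = b
  · subst hab
    have : p = Walk.nil := Walk.isPath_iff_eq_nil.mp hp.1
    subst this
    simp only [Walk.support_nil, List.mem_singleton] at hzp
    subst hzp
    rcases ha with rfl | rfl
    · exact hzx rfl
    · exact hzy rfl
  · have hadj : G.Adj a b := h a haS b hbS hab
    rw [support_eq_of_adj hadj p hp] at hzp
    simp only [List.mem_cons, List.mem_singleton, List.not_mem_nil, or_false] at hzp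
    rcases hzp with rfl | rfl
    · rcases ha with rfl | rfl
      · exact hzx rfl
      · exact hzy rfl
    · rcases hb with rfl | rfl
      · exact hzx rfl
      · exact hzy rfl

/-- Arc walk along the rim. -/
def arcW (hm : 2 ≤ m) (i : ZMod m) : (t : ℕ) → (wheelGraph m).Walk (some i) (some (i + (t : ZMod m)))
  | 0 => Walk.nil.copy rfl (by simp)
  | t+1 =>
    ((arcW hm i t).concat (wheel_adj_some.mpr ⟨by
        haveI : Fact (1 < m) := ⟨hm⟩
        simp, Or.inl rfl⟩)).copy rfl (by push_cast; ring_nf)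

lemma arcW_support (hm : 2 ≤ m) (i : ZMod m) (t : ℕ) :
    (arcW hm i t).support = (List.range (t+1)).map (fun s : ℕ => (some (i + (s : ZMod m)) : Option (ZMod m))) := by
  induction t with
  | zero => simp [arcW, List.range_succ]
  | succ t ih =>
    simp only [arcW, Walk.support_copy, Walk.support_concat, ih, List.range_succ,
      List.concat_eq_append, List.map_append, List.map_cons, List.map_nil]
    congr 2
    push_cast
    ring_nf

lemma arcW_edges (hm : 2 ≤ m) (i : ZMod m) (t : ℕ) :
    (arcW hm i t).edges =
      (List.range t).map (fun s : ℕ => s((some (i + (s : ZMod m)) : Option (ZMod m)), some (i + (s : ZMod m) + 1))) := by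
  induction t with
  | zero => simp [arcW]
  | succ t ih =>
    simp only [arcW, Walk.edges_copy, Walk.edges_concat, ih, List.range_succ,
      List.concat_eq_append, List.map_append, List.map_cons, List.map_nil]

lemma arcW_isPath (hm : 2 ≤ m) (i : ZMod m) {t : ℕ} (ht : t < m) : (arcW hm i t).IsPath := by
  haveI : NeZero m := ⟨by omega⟩
  rw [Walk.isPath_def, arcW_support]
  refine List.Nodup.map_on ?_ List.nodup_range
  intro a ha b hb hab
  rw [List.mem_range] at ha hb
  have h1 : (a : ZMod m) = b := by
    have := Option.some_injective _ hab
    exact add_left_cancel this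
  exact cast_inj' (by omega) (by omega) h1

lemma arcW_toSubgraph_adj (hm : 2 ≤ m) (i : ZMod m) {t s : ℕ} (hs : s < t) :
    (arcW hm i t).toSubgraph.Adj (some (i + s)) (some (i + s + 1)) := by
  rw [← Subgraph.mem_edgeSet, Walk.mem_edges_toSubgraph, arcW_edges]
  exact List.mem_map.mpr ⟨s, List.mem_range.mpr hs, rfl⟩

lemma arcW_induced (hm : 2 ≤ m) (i : ZMod m) {t : ℕ} (ht : t + 2 ≤ m) :
    IsInducedPathWalk (wheelGraph m) (arcW hm i t) := by
  haveI : NeZero m := ⟨by omega⟩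
  refine ⟨arcW_isPath hm i (by omega), ?_⟩
  intro a ha b hb hab
  rw [arcW_support] at ha hb
  obtain ⟨s, hs, rfl⟩ := List.mem_map.mp ha
  obtain ⟨s', hs', rfl⟩ := List.mem_map.mp hb
  rw [List.mem_range] at hs hs'
  rw [wheel_adj_some] at hab
  obtain ⟨-, hor⟩ := hab
  rcases hor with h1 | h1
  · have h2 : ((s+1 : ℕ) : ZMod m) = (s' : ℕ) := by
      push_cast
      rw [add_assoc] at h1
      exact add_left_cancel h1
    have h3 : s + 1 = s' := cast_inj' (by omega) (by omega) h2
    have h4 : (some (i + s') : Option (ZMod m)) = some (i + s + 1) := by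
      rw [← h3]; push_cast; ring_nf
    rw [h4]
    exact arcW_toSubgraph_adj hm i (by omega)
  · have h2 : ((s'+1 : ℕ) : ZMod m) = (s : ℕ) := by
      push_cast
      rw [add_assoc] at h1
      exact add_left_cancel h1
    have h3 : s' + 1 = s := cast_inj' (by omega) (by omega) h2
    have h4 : (some (i + s) : Option (ZMod m)) = some (i + s' + 1) := by
      rw [← h3]; push_cast; ring_nf
    rw [h4]
    exact (arcW_toSubgraph_adj hm i (by omega)).symm

/-- The 2-step path through the hub (or any midpoint) is induced when endpoints
are distinct and non-adjacent. -/
lemma induced_two_step {V : Type*} {G : SimpleGraph V} {x w y : V} (h1 : G.Adj x w)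
    (h2 : G.Adj w y) (hxy : ¬ G.Adj x y) (hne : x ≠ y) :
    IsInducedPathWalk G (Walk.cons h1 (Walk.cons h2 Walk.nil)) := by
  constructor
  · rw [Walk.isPath_def]
    simp [h1.ne, hne, h2.ne]
  · intro a ha b hb hab
    simp only [Walk.support_cons, Walk.support_nil, List.mem_cons, List.mem_singleton,
      List.not_mem_nil, or_false] at ha hb
    rw [← Subgraph.mem_edgeSet, Walk.mem_edges_toSubgraph]
    simp only [Walk.edges_cons, Walk.edges_nil, List.mem_cons, List.not_mem_nil, or_false]
    rcases ha with rfl | rfl | rfl <;> rcases hb with rfl | rfl | rfl <;>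
      first
        | exact absurd rfl hab.ne
        | exact absurd hab hxy
        | exact absurd hab.symm hxy
        | simp [Sym2.eq_swap]

/-- Key lemma: if `i ≠ j` are non-adjacent rim vertices, every vertex lies in
the monophonic interval of `{some i, some j}`. -/
lemma mem_interval (hm : 4 ≤ m) {i j : ZMod m} (hij : i ≠ j)
    (hnadj : ¬ (wheelGraph m).Adj (some i) (some j)) (v : Option (ZMod m)) :
    v ∈ monoInterval (wheelGraph m) {some i, some j} := by
  haveI : NeZero m := ⟨by omega⟩
  have hm2 : 2 ≤ m := by omega
  cases v with
  | none =>
    refine ⟨some i, Or.inl rfl, some j, Or.inr rfl,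
      Walk.cons wheel_adj_hub.symm (Walk.cons wheel_adj_hub Walk.nil),
      induced_two_step _ _ hnadj (by simpa using hij), by simp⟩
  | some k =>
    -- basic facts about t = (j - i).val
    set t := (j - i).val with htdef
    have hji0 : j - i ≠ 0 := sub_ne_zero.mpr hij.symm
    have ht0 : t ≠ 0 := fun h => hji0 (by rwa [ZMod.val_eq_zero] at h)
    have htm : t < m := ZMod.val_lt _
    have hcast : ((t : ℕ) : ZMod m) = j - i := ZMod.natCast_zmod_val _
    have ht1 : t ≠ 1 := by
      intro h
      apply hnadj
      rw [wheel_adj_some]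
      refine ⟨hij, Or.inl ?_⟩
      have : j - i = 1 := by rw [← hcast, h, Nat.cast_one]
      rw [← this]; ring
    have htm1 : t ≠ m - 1 := by
      intro h
      apply hnadj
      rw [wheel_adj_some]
      refine ⟨hij, Or.inr ?_⟩
      have hneg : j - i = -1 := by
        rw [← hcast, h]
        have : ((m : ℕ) : ZMod m) = 0 := ZMod.natCast_self m
        have hm1 : ((m - 1 : ℕ) : ZMod m) = (m : ℕ) - 1 := by
          push_cast [Nat.cast_sub (by omega : 1 ≤ m)]
          ring
        rw [hm1, this]; ring
      have : j = i - 1 := by rw [← sub_add_cancel j i, hneg]; ring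
      rw [this]; ring
    have ht2 : 2 ≤ t ∧ t ≤ m - 2 := ⟨by omega, by omega⟩
    set s := (k - i).val with hsdef
    have hsm : s < m := ZMod.val_lt _
    have hscast : ((s : ℕ) : ZMod m) = k - i := ZMod.natCast_zmod_val _
    by_cases hst : s ≤ t
    · refine ⟨some i, Or.inl rfl, some (i + (t : ZMod m)), ?_, arcW hm2 i t,
        arcW_induced hm2 i (by omega), ?_⟩
      · right
        show some (i + (t : ZMod m)) = some j
        rw [hcast]; congr 1; ring
      · rw [arcW_support]
        refine List.mem_map.mpr ⟨s, List.mem_range.mpr (by omega), ?_⟩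
        rw [hscast]; congr 1; ring
    · -- use the arc from j
      push_neg at hst
      set t' := (i - j).val with ht'def
      have ht'cast : ((t' : ℕ) : ZMod m) = i - j := ZMod.natCast_zmod_val _
      have ht'm : t' < m := ZMod.val_lt _
      have ht'eq : t' = m - t := by
        have h1 : ((t + t' : ℕ) : ZMod m) = 0 := by
          push_cast [hcast, ht'cast]; ring
        have h2 : t + t' ≠ 0 := by omega
        have h3 : m ∣ t + t' := (ZMod.natCast_eq_zero_iff _ _).mp h1
        have h4 : t + t' < 2 * m := by omega
        obtain ⟨c, hc⟩ := h3
        have hc2 : c < 2 := by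
          by_contra hge
          push_neg at hge
          have : m * 2 ≤ m * c := Nat.mul_le_mul_left m hge
          omega
        interval_cases c <;> omega
      have hs' : (k - j).val = s - t := by
        have h1 : ((s - t : ℕ) : ZMod m) = k - j := by
          push_cast [Nat.cast_sub (by omega : t ≤ s), hscast, hcast]
          ring
        rw [← h1, ZMod.val_cast_of_lt (by omega)]
      refine ⟨some j, Or.inr rfl, some (j + (t' : ZMod m)), ?_, arcW hm2 j t',
        arcW_induced hm2 j (by omega), ?_⟩
      · left
        show some (j + (t' : ZMod m)) = some i
        rw [ht'cast]; congr 1; ring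
      · rw [arcW_support]
        refine List.mem_map.mpr ⟨s - t, List.mem_range.mpr (by omega), ?_⟩
        have : ((s - t : ℕ) : ZMod m) = k - j := by
          push_cast [Nat.cast_sub (by omega : t ≤ s), hscast, hcast]
          ring
        rw [this]; congr 1; ring

lemma no_rim_triangle (hm : 4 ≤ m) {i j k : ZMod m}
    (hij : (wheelGraph m).Adj (some i) (some j))
    (hik : (wheelGraph m).Adj (some i) (some k))
    (hjk : (wheelGraph m).Adj (some j) (some k)) : False := by
  haveI : NeZero m := ⟨by omega⟩
  rw [wheel_adj_some] at hij hik hjk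
  obtain ⟨hij1, h1⟩ := hij
  obtain ⟨hik1, h2⟩ := hik
  obtain ⟨hjk1, h3⟩ := hjk
  have hc : ∀ c : ℕ, 0 < c → c < m → ((c : ℕ) : ZMod m) ≠ 0 := by
    intro c hc1 hc2 h
    have := congrArg ZMod.val h
    rw [ZMod.val_cast_of_lt hc2, ZMod.val_zero] at this
    omega
  rcases h1 with h1 | h1 <;> rcases h2 with h2 | h2 <;> rcases h3 with h3 | h3
  · exact hjk1 (h1.symm.trans h2)
  · exact hjk1 (h1.symm.trans h2)
  · exact hc 3 (by norm_num) (by omega) (by push_cast; linear_combination h1 + h2 + h3)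
  · exact hij1 (h2.symm.trans h3)
  · exact hik1 (h1.symm.trans h3)
  · exact hc 3 (by norm_num) (by omega) (by push_cast; linear_combination h1 + h2 + h3)
  · exact hjk1 (add_right_cancel (h1.trans h2.symm))
  · exact hjk1 (add_right_cancel (h1.trans h2.symm))

lemma genpos_ncard_le (hm : 4 ≤ m) {S : Set (Option (ZMod m))}
    (hS : monoGenPos (wheelGraph m) S) : S.ncard ≤ 3 := by
  haveI : NeZero m := ⟨by omega⟩
  by_contra hcon
  push_neg at hcon
  set S' : Set (Option (ZMod m)) := S \ {none} with hS'def
  have h3 : 2 < S'.ncard := by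
    have h1 : S.ncard ≤ S'.ncard + 1 := by
      have hsub : S ⊆ insert none S' := by
        intro x hx
        by_cases hx0 : x = none
        · exact Set.mem_insert_iff.mpr (Or.inl hx0)
        · exact Set.mem_insert_iff.mpr (Or.inr ⟨hx, hx0⟩)
      calc S.ncard ≤ (insert none S').ncard := Set.ncard_le_ncard hsub (Set.toFinite _)
        _ ≤ S'.ncard + 1 := Set.ncard_insert_le _ _
    omega
  obtain ⟨a, ha, b, hb, c, hc, hab, hac, hbc⟩ := (Set.two_lt_ncard (Set.toFinite _)).mp h3
  obtain ⟨i, rfl⟩ := Option.ne_none_iff_exists'.mp (by simpa using ha.2)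
  obtain ⟨j, rfl⟩ := Option.ne_none_iff_exists'.mp (by simpa using hb.2)
  obtain ⟨k, rfl⟩ := Option.ne_none_iff_exists'.mp (by simpa using hc.2)
  have hij : i ≠ j := fun h => hab (by rw [h])
  have hik : i ≠ k := fun h => hac (by rw [h])
  have hjk : j ≠ k := fun h => hbc (by rw [h])
  by_cases h1 : (wheelGraph m).Adj (some i) (some j)
  · by_cases h2 : (wheelGraph m).Adj (some i) (some k)
    · by_cases h4 : (wheelGraph m).Adj (some j) (some k)
      · exact no_rim_triangle hm h1 h2 h4
      · exact hS (some j) hb.1 (some k) hc.1 (some i) ha.1 hbc hab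
          hac (mem_interval hm hjk h4 (some i))
    · exact hS (some i) ha.1 (some k) hc.1 (some j) hb.1 hac hab.symm
        hbc (mem_interval hm hik h2 (some j))
  · exact hS (some i) ha.1 (some j) hb.1 (some k) hc.1 hab hac.symm
      hbc.symm (mem_interval hm hij h1 (some k))

lemma exists_genpos3 (hm : 4 ≤ m) :
    ∃ S : Set (Option (ZMod m)), monoGenPos (wheelGraph m) S ∧ S.ncard = 3 := by
  haveI : NeZero m := ⟨by omega⟩
  haveI : Fact (1 < m) := ⟨by omega⟩
  have h01 : (0 : ZMod m) ≠ 1 := zero_ne_one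
  refine ⟨{none, some 0, some 1}, monoGenPos_of_pairwise_adj ?_, ?_⟩
  · intro a ha b hb hab
    rcases ha with rfl | rfl | rfl <;> rcases hb with rfl | rfl | rfl <;>
      first
        | exact absurd rfl hab
        | exact wheel_adj_hub
        | exact wheel_adj_hub.symm
        | exact wheel_adj_some.mpr ⟨h01, Or.inl (by ring)⟩
        | exact (wheel_adj_some.mpr ⟨h01, Or.inl (by ring)⟩).symm
  · rw [Set.ncard_insert_of_notMem (by simp), Set.ncard_insert_of_notMem (by simp [h01]),
      Set.ncard_singleton]

end WheelAux

/-- for `n ≥ 5`, the wheel `W_n` (cycle `C_{n-1}` plus a universal vertex)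
has monophonic general position number 3. -/
theorem stmt10 (n : ℕ) (hn : 5 ≤ n) [NeZero (n - 1)] :
    gpMono (wheelGraph (n - 1)) = 3 := by
  have hm : 4 ≤ n - 1 := by omega
  have hbdd : ∀ x ∈ {m | ∃ S : Set (Option (ZMod (n-1))),
      monoGenPos (wheelGraph (n-1)) S ∧ S.ncard = m}, x ≤ 3 := by
    rintro x ⟨S, hS, rfl⟩
    exact WheelAux.genpos_ncard_le hm hS
  have hmem : 3 ∈ {m | ∃ S : Set (Option (ZMod (n-1))),
      monoGenPos (wheelGraph (n-1)) S ∧ S.ncard = m} := WheelAux.exists_genpos3 hm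
  refine le_antisymm (csSup_le ⟨3, hmem⟩ hbdd) (le_csSup ⟨3, hbdd⟩ hmem)
end

section
/- Let G be a graph, S ⊆ V(G), and k ≥ 1 an integer. If the P3 iteration time of S is at least k, then the subgraph H induced by the P3 convex hull of S contains a path v_1, ..., v_k of vertices not in S such that v_1 has at least two neighbors in S, each v_i with 1 ≤ i < k has degree at least 3 in H, and v_k has degree at least 2 in H. -/
/-!
Write `L n` for the `n`-th iterate of the P3 interval function on `S`. A vertex of `L (n + 1) \ L n`
has two distinct neighbours in `L n`, and for `n ≥ 1` they cannot both lie in `L (n - 1)`, since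
otherwise the vertex would already belong to `L n`. Starting from a vertex that first appears in
`L k`, which exists because `L (k - 1)` is not yet closed, we walk down through the layers one step
at a time. Each vertex of the resulting path has its two old neighbours in the previous iterate, and
all but the last also have their successor on the path, which lies outside that iterate.
-/

namespace ConvexHullIteration

variable {V : Type*} {I : Set V → Set V} {S : Set V}

theorem subset_convexHullOf : S ⊆ convexHullOf I S :=
  Set.subset_sInter fun _ hT => hT.1

theorem convexHullOf_subset {T : Set V} (hST : S ⊆ T) (hT : I T ⊆ T) :
    convexHullOf I S ⊆ T :=
  Set.sInter_subset_of_mem ⟨hST, hT⟩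

theorem image_convexHullOf_subset (hI : Monotone I) : I (convexHullOf I S) ⊆ convexHullOf I S :=
  Set.subset_sInter fun _ hT => (hI (Set.sInter_subset_of_mem hT)).trans hT.2

theorem iterate_subset_convexHullOf (hI : Monotone I) (n : ℕ) : I^[n] S ⊆ convexHullOf I S := by
  induction n with
  | zero => exact subset_convexHullOf
  | succ n ih =>
    rw [Function.iterate_succ_apply']
    exact (hI ih).trans (image_convexHullOf_subset hI)

theorem monotone_iterate_apply (hI : ∀ T, T ⊆ I T) : Monotone fun n => I^[n] S :=
  monotone_nat_of_le_succ fun n => by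
    simp only [Function.iterate_succ_apply']
    exact hI _

/-- `x ∈ iterLayer I S n` means that `x` has iteration time `n + 1`. -/
def iterLayer (I : Set V → Set V) (S : Set V) (n : ℕ) : Set V :=
  I^[n + 1] S \ I^[n] S

theorem eq_of_mem_iterLayer (hI : ∀ T, T ⊆ I T) {x : V} {i j : ℕ}
    (hi : x ∈ iterLayer I S i) (hj : x ∈ iterLayer I S j) : i = j := by
  by_contra hne
  rcases Nat.lt_or_gt_of_ne hne with hlt | hlt
  · exact hj.2 (monotone_iterate_apply hI hlt hi.1)
  · exact hi.2 (monotone_iterate_apply hI hlt hj.1)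

theorem iterLayer_nonempty_of_lt_iterTimeSet (hext : ∀ T, T ⊆ I T) (hmono : Monotone I)
    {n : ℕ} (hn : n < iterTimeSet I S) : (iterLayer I S n).Nonempty := by
  by_contra hempty
  have hclosed : I (I^[n] S) ⊆ I^[n] S := by
    rw [← Function.iterate_succ_apply' I n S]
    exact Set.sdiff_eq_empty.mp (Set.not_nonempty_iff_eq_empty.mp hempty)
  have hhull : I^[n] S = convexHullOf I S :=
    (iterate_subset_convexHullOf hmono n).antisymm
      (convexHullOf_subset (monotone_iterate_apply hext n.zero_le) hclosed)
  exact hn.not_ge (Nat.sInf_le hhull)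

end ConvexHullIteration

open ConvexHullIteration

namespace P3Interval

variable {V : Type*} (G : SimpleGraph V) {S : Set V}

theorem subset_p3Interval (T : Set V) : T ⊆ p3Interval G T :=
  Set.subset_union_left

theorem monotone_p3Interval : Monotone (p3Interval G) := by
  rintro A B hAB v (hv | ⟨a, ha, b, hb, hab, hva, hvb⟩)
  · exact Or.inl (hAB hv)
  · exact Or.inr ⟨a, hAB ha, b, hAB hb, hab, hva, hvb⟩

variable {G}

theorem exists_adj_adj_of_mem_iterLayer {n : ℕ} {x : V}
    (hx : x ∈ iterLayer (p3Interval G) S n) :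
    ∃ a ∈ (p3Interval G)^[n] S, ∃ b ∈ (p3Interval G)^[n] S,
      a ≠ b ∧ G.Adj x a ∧ G.Adj x b := by
  obtain ⟨hx, hxn⟩ := hx
  rw [Function.iterate_succ_apply'] at hx
  exact hx.resolve_left hxn

theorem exists_adj_mem_iterLayer {n : ℕ} {x : V} (hx : x ∈ iterLayer (p3Interval G) S (n + 1)) :
    ∃ u ∈ iterLayer (p3Interval G) S n, G.Adj x u := by
  obtain ⟨a, ha, b, hb, hab, hxa, hxb⟩ := exists_adj_adj_of_mem_iterLayer hx
  by_cases haL : a ∈ (p3Interval G)^[n] S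
  · by_cases hbL : b ∈ (p3Interval G)^[n] S
    · refine absurd ?_ hx.2
      rw [Function.iterate_succ_apply']
      exact Or.inr ⟨a, haL, b, hbL, hab, hxa, hxb⟩
    · exact ⟨b, ⟨hb, hbL⟩, hxb⟩
  · exact ⟨a, ⟨ha, haL⟩, hxa⟩

theorem exists_path_through_iterLayers {n : ℕ} {x : V} (hx : x ∈ iterLayer (p3Interval G) S n) :
    ∃ v : ℕ → V, v n = x ∧ (∀ i ≤ n, v i ∈ iterLayer (p3Interval G) S i) ∧
      ∀ i < n, G.Adj (v i) (v (i + 1)) := by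
  induction n generalizing x with
  | zero =>
    exact ⟨fun _ => x, rfl, fun i hi => by rwa [Nat.le_zero.mp hi],
      fun _ hi => (Nat.not_lt_zero _ hi).elim⟩
  | succ n ih =>
    obtain ⟨u, hu, hxu⟩ := exists_adj_mem_iterLayer hx
    obtain ⟨v, hvn, hv, hadj⟩ := ih hu
    refine ⟨Function.update v (n + 1) x, by simp, fun i hi => ?_, fun i hi => ?_⟩
    · rcases hi.lt_or_eq with hi | rfl
      · rw [Function.update_of_ne (by omega)]
        exact hv i (by omega)
      · simpa using hx
    · rw [Function.update_of_ne (by omega)]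
      rcases (Nat.lt_succ_iff.mp hi).lt_or_eq with hi | rfl
      · rw [Function.update_of_ne (by omega)]
        exact hadj i hi
      · simpa [hvn] using hxu.symm

theorem two_le_ncard_hull_neighbors [Finite V] {n : ℕ} {x : V}
    (hx : x ∈ iterLayer (p3Interval G) S n) :
    2 ≤ {u | u ∈ convexHullOf (p3Interval G) S ∧ G.Adj x u}.ncard := by
  obtain ⟨a, ha, b, hb, hab, hxa, hxb⟩ := exists_adj_adj_of_mem_iterLayer hx
  have hsub : {a, b} ⊆ {u | u ∈ convexHullOf (p3Interval G) S ∧ G.Adj x u} := by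
    rintro u (rfl | rfl)
    · exact ⟨iterate_subset_convexHullOf (monotone_p3Interval G) n ha, hxa⟩
    · exact ⟨iterate_subset_convexHullOf (monotone_p3Interval G) n hb, hxb⟩
  exact (Set.ncard_pair hab).ge.trans (Set.ncard_le_ncard hsub)

theorem three_le_ncard_hull_neighbors [Finite V] {n : ℕ} {x y : V}
    (hx : x ∈ iterLayer (p3Interval G) S n) (hy : y ∈ iterLayer (p3Interval G) S (n + 1))
    (hxy : G.Adj x y) :
    3 ≤ {u | u ∈ convexHullOf (p3Interval G) S ∧ G.Adj x u}.ncard := by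
  obtain ⟨a, ha, b, hb, hab, hxa, hxb⟩ := exists_adj_adj_of_mem_iterLayer hx
  have hy_old : ∀ c ∈ (p3Interval G)^[n] S, c ≠ y := fun c hc hcy =>
    hy.2 (hcy ▸ monotone_iterate_apply (subset_p3Interval G) n.le_succ hc)
  have hsub : {a, b, y} ⊆ {u | u ∈ convexHullOf (p3Interval G) S ∧ G.Adj x u} := by
    rintro u (rfl | rfl | rfl)
    · exact ⟨iterate_subset_convexHullOf (monotone_p3Interval G) n ha, hxa⟩
    · exact ⟨iterate_subset_convexHullOf (monotone_p3Interval G) n hb, hxb⟩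
    · exact ⟨iterate_subset_convexHullOf (monotone_p3Interval G) _ hy.1, hxy⟩
  have hcard : ({a, b, y} : Set V).ncard = 3 :=
    Set.ncard_eq_three.mpr ⟨a, b, y, hab, hy_old a ha, hy_old b hb, rfl⟩
  exact hcard.ge.trans (Set.ncard_le_ncard hsub)

end P3Interval

open P3Interval

/-- if the P3 iteration time of `S` is at least `k ≥ 1`, then the subgraph
`H` induced by the P3 convex hull of `S` contains a path `v 0, …, v (k-1)` of vertices
outside `S`, where `v 0` has two distinct neighbors in `S`, each `v i` with `i < k-1`
has degree at least 3 in `H`, and `v (k-1)` has degree at least 2 in `H`. -/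
theorem stmt11 {V : Type*} [Fintype V] (G : SimpleGraph V) (S : Set V) (k : ℕ)
    (hk : 1 ≤ k) (h : k ≤ iterTimeSet (p3Interval G) S) :
    ∃ v : ℕ → V,
      (∀ i j, i < k → j < k → v i = v j → i = j) ∧
      (∀ i, i < k → v i ∈ convexHullOf (p3Interval G) S ∧ v i ∉ S) ∧
      (∀ i, i + 1 < k → G.Adj (v i) (v (i + 1))) ∧
      (∃ a ∈ S, ∃ b ∈ S, a ≠ b ∧ G.Adj (v 0) a ∧ G.Adj (v 0) b) ∧
      (∀ i, i + 1 < k →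
        3 ≤ {u | u ∈ convexHullOf (p3Interval G) S ∧ G.Adj (v i) u}.ncard) ∧
      2 ≤ {u | u ∈ convexHullOf (p3Interval G) S ∧ G.Adj (v (k - 1)) u}.ncard := by
  obtain ⟨n, rfl⟩ : ∃ n, k = n + 1 := ⟨k - 1, by omega⟩
  have hext := subset_p3Interval G
  obtain ⟨w, hw⟩ := iterLayer_nonempty_of_lt_iterTimeSet hext (monotone_p3Interval G) h
  obtain ⟨v, -, hv, hadj⟩ := exists_path_through_iterLayers hw
  have hlayer : ∀ i < n + 1, v i ∈ iterLayer (p3Interval G) S i := fun i hi => hv i (by omega)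
  have hmono := monotone_p3Interval G
  refine ⟨v, ?_, ?_, fun i hi => hadj i (by omega), ?_, ?_, ?_⟩
  · exact fun i j hi hj hij => eq_of_mem_iterLayer hext (hlayer i hi) (hij ▸ hlayer j hj)
  · exact fun i hi => ⟨iterate_subset_convexHullOf hmono _ (hlayer i hi).1,
      fun hS => (hlayer i hi).2 (monotone_iterate_apply hext i.zero_le hS)⟩
  · exact exists_adj_adj_of_mem_iterLayer (hlayer 0 n.succ_pos)
  · exact fun i hi => three_le_ncard_hull_neighbors (hlayer i (by omega)) (hlayer (i + 1) hi)
      (hadj i (by omega))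
  · simpa using two_le_ncard_hull_neighbors (hlayer n n.lt_succ_self)
end

section
/- Let G be a triangle-free graph with at least 3 vertices and let G_u be obtained from G by adding a new vertex u adjacent to all vertices of G. Then the iteration time of G_u in the geodesic convexity equals max(ti_P3(G), 1), where ti_P3(G) is the iteration time of G in the P3 convexity. -/
/-- The graph obtained from `G` by adding a universal vertex `none`. -/
def addUniversal {V : Type*} (G : SimpleGraph V) : SimpleGraph (Option V) :=
  SimpleGraph.fromRel (fun a b =>
    a = none ∨ ∃ u v : V, a = some u ∧ b = some v ∧ G.Adj u v)

/-!
In `G_u` any two vertices are at distance at most 2, so a geodesic step adds exactly the common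
neighbours of pairs at distance 2, i.e. of distinct non-adjacent vertices of `G`. Such a pair has
the universal vertex `u` as a common neighbour, and by triangle-freeness the two `G`-neighbours of
any vertex are non-adjacent. Hence if the `G`-part of `S` is a clique, `S` is already convex,
and otherwise every geodesic step adds `u` and acts on the `G`-part as a P3 step. So the geodesic
time of `S` is at most `max (ti_P3 (S ∖ u)) 1`, with equality when `u ∉ S` and `S ∖ u` is not a
clique; and `V` itself is not a clique because `G` has at least three vertices and no triangle.
-/

open Function SimpleGraph

section IterationTime

variable {W : Type*} {I : Set W → Set W}

lemma subset_convexHullOf (S : Set W) : S ⊆ convexHullOf I S :=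
  fun _ hx => Set.mem_sInter.2 fun _ hT => hT.1 hx

lemma convexHullOf_subset {S T : Set W} (hST : S ⊆ T) (hT : I T ⊆ T) :
    convexHullOf I S ⊆ T :=
  Set.sInter_subset_of_mem ⟨hST, hT⟩

lemma map_convexHullOf_subset (hI : Monotone I) (S : Set W) :
    I (convexHullOf I S) ⊆ convexHullOf I S :=
  Set.subset_sInter fun _ hT => (hI (Set.sInter_subset_of_mem hT)).trans hT.2

lemma iterate_subset_convexHullOf (hI : Monotone I) (S : Set W) (k : ℕ) :
    I^[k] S ⊆ convexHullOf I S := by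
  induction k with
  | zero => exact subset_convexHullOf S
  | succ k ih =>
    rw [iterate_succ_apply']
    exact (hI ih).trans (map_convexHullOf_subset hI S)

lemma iterate_eq_convexHullOf_iff (hext : ∀ S, S ⊆ I S) (hI : Monotone I) {S : Set W}
    {k : ℕ} : I^[k] S = convexHullOf I S ↔ I (I^[k] S) = I^[k] S := by
  refine ⟨fun h => ?_, fun h => ?_⟩
  · rw [h]
    exact (map_convexHullOf_subset hI S).antisymm (hext _)
  · exact (convexHullOf_subset (id_le_iterate_of_id_le hext k S) h.le).antisymm'
      (iterate_subset_convexHullOf hI S k)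

lemma exists_iterate_fixed [Finite W] (hext : ∀ S, S ⊆ I S) (S : Set W) :
    ∃ k, I (I^[k] S) = I^[k] S := by
  let chain : ℕ →o Set W :=
    ⟨fun k => I^[k] S, monotone_nat_of_le_succ fun k => by
      rw [iterate_succ_apply']
      exact hext _⟩
  obtain ⟨n, hn⟩ := WellFoundedGT.monotone_chain_condition chain
  exact ⟨n, by simpa [chain, iterate_succ_apply'] using (hn (n + 1) n.le_succ).symm⟩

lemma iterTimeSet_le_iff [Finite W] (hext : ∀ S, S ⊆ I S) (hI : Monotone I) {S : Set W}
    {k : ℕ} : iterTimeSet I S ≤ k ↔ I (I^[k] S) = I^[k] S := by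
  refine ⟨fun hk => ?_, fun h => Nat.sInf_le ((iterate_eq_convexHullOf_iff hext hI).2 h)⟩
  obtain ⟨n, hn⟩ := exists_iterate_fixed hext S
  have hfix : I (I^[iterTimeSet I S] S) = I^[iterTimeSet I S] S :=
    (iterate_eq_convexHullOf_iff hext hI).1
      (Nat.sInf_mem (s := {k | I^[k] S = convexHullOf I S})
        ⟨n, (iterate_eq_convexHullOf_iff hext hI).2 hn⟩)
  obtain ⟨d, rfl⟩ := Nat.exists_eq_add_of_le hk
  rw [add_comm, iterate_add_apply, iterate_fixed hfix, hfix]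

end IterationTime

section Intervals

variable {V : Type*}

lemma subset_p3Interval (G : SimpleGraph V) (S : Set V) : S ⊆ p3Interval G S :=
  Set.subset_union_left

lemma p3Interval_mono (G : SimpleGraph V) : Monotone (p3Interval G) := by
  rintro A B h v (hv | ⟨a, ha, b, hb, hab, hva, hvb⟩)
  · exact Or.inl (h hv)
  · exact Or.inr ⟨a, h ha, b, h hb, hab, hva, hvb⟩

lemma p3Interval_eq_self_of_isClique {G : SimpleGraph V} (htf : G.CliqueFree 3) {T : Set V}
    (hT : G.IsClique T) : p3Interval G T = T := by
  refine Set.union_eq_left.2 ?_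
  rintro v ⟨a, ha, b, hb, hab, hva, hvb⟩
  exact (isIndepSet_neighborSet_of_triangleFree G htf v hva hvb hab (hT ha hb hab)).elim

lemma subset_geoInterval (H : SimpleGraph V) (S : Set V) : S ⊆ geoInterval H S :=
  fun v hv => ⟨v, hv, v, hv, .nil, .nil, by simp, by simp⟩

lemma geoInterval_mono (H : SimpleGraph V) : Monotone (geoInterval H) := by
  rintro A B h v ⟨x, hx, y, hy, p, hp⟩
  exact ⟨x, h hx, y, h hy, p, hp⟩

lemma geoInterval_eq_of_dist_le_two {H : SimpleGraph V} (hH : ∀ x y, H.dist x y ≤ 2)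
    (S : Set V) :
    geoInterval H S = S ∪ {w | ∃ x ∈ S, ∃ y ∈ S, H.dist x y = 2 ∧ H.Adj x w ∧ H.Adj w y} := by
  ext v
  constructor
  · rintro ⟨x, hx, y, hy, p, -, hlen, hv⟩
    have hd := hH x y
    match p, hv, hlen with
    | .nil, hv, _ =>
      rw [Walk.support_nil, List.mem_singleton] at hv
      exact Or.inl (hv ▸ hx)
    | .cons _ .nil, hv, _ =>
      simp only [Walk.support_cons, Walk.support_nil, List.mem_cons,
        List.not_mem_nil, or_false] at hv
      rcases hv with rfl | rfl
      exacts [Or.inl hx, Or.inl hy]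
    | .cons hxw (.cons hwy .nil), hv, hlen =>
      simp only [Walk.support_cons, Walk.support_nil, List.mem_cons,
        List.not_mem_nil, or_false] at hv
      rcases hv with rfl | rfl | rfl
      · exact Or.inl hx
      · exact Or.inr ⟨x, hx, y, hy, by simpa using hlen.symm, hxw, hwy⟩
      · exact Or.inl hy
    | .cons _ (.cons _ (.cons _ _)), _, hlen =>
      simp only [Walk.length_cons] at hlen
      omega
  · rintro (hv | ⟨x, hx, y, hy, hd, hxv, hvy⟩)
    · exact subset_geoInterval H S hv
    have hxy : x ≠ y := by
      rintro rfl
      simp at hd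
    refine ⟨x, hx, y, hy, .cons hxv (.cons hvy .nil), ?_, by simp [hd], by simp⟩
    simp [Walk.isPath_def, hxv.ne, hvy.ne, hxy]

end Intervals

@[simp]
lemma preimage_some_insert_none {V : Type*} (A : Set V) :
    some ⁻¹' insert none (some '' A) = A := by
  ext
  simp

namespace AddUniversal

variable {V : Type*} {G : SimpleGraph V}

@[simp]
lemma adj_none_some (a : V) : (addUniversal G).Adj none (some a) :=
  ⟨by simp, Or.inl (Or.inl rfl)⟩

@[simp]
lemma adj_some_some {a b : V} : (addUniversal G).Adj (some a) (some b) ↔ G.Adj a b := by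
  simpa [addUniversal, G.adj_comm b a] using fun h => G.ne_of_adj h

lemma dist_le_two (x y : Option V) : (addUniversal G).dist x y ≤ 2 := by
  match x, y with
  | none, none => simp
  | none, some b => exact (dist_le (.cons (adj_none_some b) .nil)).trans (by simp)
  | some a, none => exact (dist_le (.cons (adj_none_some a).symm .nil)).trans (by simp)
  | some a, some b => exact dist_le (.cons (adj_none_some a).symm (.cons (adj_none_some b) .nil))

lemma dist_eq_two_iff {x y : Option V} : (addUniversal G).dist x y = 2 ↔
    ∃ a b, x = some a ∧ y = some b ∧ a ≠ b ∧ ¬G.Adj a b := by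
  match x, y with
  | none, none => simp
  | none, some b => simp [dist_eq_one_iff_adj.2 (adj_none_some (G := G) b)]
  | some a, none => simp [dist_eq_one_iff_adj.2 (adj_none_some (G := G) a).symm]
  | some a, some b =>
    simp only [Option.some.injEq, exists_and_left, exists_eq_left']
    refine ⟨fun h => ⟨?_, fun hab => ?_⟩, ?_⟩
    · rintro rfl
      simp at h
    · rw [dist_eq_one_iff_adj.2 (adj_some_some.2 hab)] at h
      omega
    · rintro ⟨hab, hnadj⟩
      have hreach : (addUniversal G).Reachable (some a) (some b) :=
        ⟨.cons (adj_none_some a).symm (.cons (adj_none_some b) .nil)⟩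
      have h0 := mt hreach.dist_eq_zero_iff.1 (by simpa using hab)
      have h1 := mt (dist_eq_one_iff_adj (G := addUniversal G) (u := some a) (v := some b)).1
        (by simpa using hnadj)
      have h2 := dist_le_two (G := G) (some a) (some b)
      omega

lemma some_mem_geoInterval_iff (htf : G.CliqueFree 3) (S : Set (Option V)) (v : V) :
    some v ∈ geoInterval (addUniversal G) S ↔ v ∈ p3Interval G (some ⁻¹' S) := by
  rw [geoInterval_eq_of_dist_le_two dist_le_two]
  constructor
  · rintro (hv | ⟨x, hx, y, hy, hd, hxv, hvy⟩)
    · exact Or.inl hv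
    obtain ⟨a, b, rfl, rfl, hab, -⟩ := dist_eq_two_iff.1 hd
    exact Or.inr ⟨a, hx, b, hy, hab, (adj_some_some.1 hxv).symm, adj_some_some.1 hvy⟩
  · rintro (hv | ⟨a, ha, b, hb, hab, hva, hvb⟩)
    · exact Or.inl hv
    have hnadj : ¬G.Adj a b := isIndepSet_neighborSet_of_triangleFree G htf v hva hvb hab
    exact Or.inr ⟨some a, ha, some b, hb, dist_eq_two_iff.2 ⟨a, b, rfl, rfl, hab, hnadj⟩,
      adj_some_some.2 hva.symm, adj_some_some.2 hvb⟩

lemma none_mem_geoInterval_iff (S : Set (Option V)) :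
    none ∈ geoInterval (addUniversal G) S ↔ none ∈ S ∨ ¬G.IsClique (some ⁻¹' S) := by
  rw [geoInterval_eq_of_dist_le_two dist_le_two]
  refine or_congr Iff.rfl ⟨?_, fun hS => ?_⟩
  · rintro ⟨x, hx, y, hy, hd, -⟩ hS
    obtain ⟨a, b, rfl, rfl, hab, hnadj⟩ := dist_eq_two_iff.1 hd
    exact hnadj (hS hx hy hab)
  · obtain ⟨a, ha, b, hb, hab, hnadj⟩ :
        ∃ a ∈ some ⁻¹' S, ∃ b ∈ some ⁻¹' S, a ≠ b ∧ ¬G.Adj a b := by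
      simpa [IsClique, Set.Pairwise] using hS
    exact ⟨some a, ha, some b, hb, dist_eq_two_iff.2 ⟨a, b, rfl, rfl, hab, hnadj⟩,
      (adj_none_some a).symm, adj_none_some b⟩

lemma geoInterval_eq_self (htf : G.CliqueFree 3) {S : Set (Option V)}
    (hS : G.IsClique (some ⁻¹' S)) : geoInterval (addUniversal G) S = S := by
  ext x
  cases x with
  | none => simp [none_mem_geoInterval_iff, hS]
  | some v =>
    rw [some_mem_geoInterval_iff htf, p3Interval_eq_self_of_isClique htf hS]
    rfl

lemma geoInterval_eq_insert_none (htf : G.CliqueFree 3) {S : Set (Option V)}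
    (hS : ¬G.IsClique (some ⁻¹' S)) :
    geoInterval (addUniversal G) S = insert none (some '' p3Interval G (some ⁻¹' S)) := by
  ext x
  cases x with
  | none => simp [none_mem_geoInterval_iff, hS]
  | some v => simp [some_mem_geoInterval_iff htf]

lemma iterate_geoInterval (htf : G.CliqueFree 3) {S : Set (Option V)}
    (hS : ¬G.IsClique (some ⁻¹' S)) (k : ℕ) :
    (geoInterval (addUniversal G))^[k + 1] S =
      insert none (some '' (p3Interval G)^[k + 1] (some ⁻¹' S)) := by
  induction k with
  | zero => simpa using geoInterval_eq_insert_none htf hS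
  | succ k ih =>
    have hS' : ¬G.IsClique (some ⁻¹' (geoInterval (addUniversal G))^[k + 1] S) := by
      rw [ih, preimage_some_insert_none]
      exact fun h => hS (h.subset (id_le_iterate_of_id_le (subset_p3Interval G) _ _))
    rw [iterate_succ_apply', geoInterval_eq_insert_none htf hS', ih, preimage_some_insert_none,
      ← iterate_succ_apply' (p3Interval G)]

lemma iterTimeSet_geoInterval_le_succ_iff [Finite V] (htf : G.CliqueFree 3)
    {S : Set (Option V)} (hS : ¬G.IsClique (some ⁻¹' S)) (k : ℕ) :
    iterTimeSet (geoInterval (addUniversal G)) S ≤ k + 1 ↔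
      iterTimeSet (p3Interval G) (some ⁻¹' S) ≤ k + 1 := by
  rw [iterTimeSet_le_iff (subset_geoInterval _) (geoInterval_mono _),
    iterTimeSet_le_iff (subset_p3Interval G) (p3Interval_mono G),
    ← iterate_succ_apply' (geoInterval _), iterate_geoInterval htf hS, iterate_geoInterval htf hS,
    ← iterate_succ_apply' (p3Interval G)]
  exact ⟨fun h => by simpa using congrArg (some ⁻¹' ·) h, fun h => by rw [h]⟩

lemma iterTimeSet_geoInterval_le [Finite V] (htf : G.CliqueFree 3) (S : Set (Option V)) :
    iterTimeSet (geoInterval (addUniversal G)) S ≤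
      max (iterTimeSet (p3Interval G) (some ⁻¹' S)) 1 := by
  by_cases hS : G.IsClique (some ⁻¹' S)
  · have : iterTimeSet (geoInterval (addUniversal G)) S ≤ 0 :=
      (iterTimeSet_le_iff (subset_geoInterval _) (geoInterval_mono _)).2
        (geoInterval_eq_self htf hS)
    omega
  · obtain ⟨k, hk⟩ := Nat.exists_eq_add_one.2 (lt_max_of_lt_right one_pos)
    rw [hk, iterTimeSet_geoInterval_le_succ_iff htf hS, ← hk]
    exact le_max_left _ _

lemma iterTimeSet_geoInterval_image [Finite V] (htf : G.CliqueFree 3) {T : Set V}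
    (hT : ¬G.IsClique T) :
    iterTimeSet (geoInterval (addUniversal G)) (some '' T) =
      max (iterTimeSet (p3Interval G) T) 1 := by
  have hpre : some ⁻¹' (some '' T) = T := Set.preimage_image_eq T (Option.some_injective V)
  refine eq_of_forall_ge_iff fun k => ?_
  cases k with
  | zero =>
    refine iff_of_false (fun h => ?_) (by simp)
    have hnone : none ∈ geoInterval (addUniversal G) (some '' T) :=
      (none_mem_geoInterval_iff _).2 (Or.inr (by rwa [hpre]))
    have hfix := (iterTimeSet_le_iff (subset_geoInterval _) (geoInterval_mono _)).1 h
    rw [iterate_zero_apply] at hfix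
    simp [hfix] at hnone
  | succ k =>
    rw [iterTimeSet_geoInterval_le_succ_iff htf (by rwa [hpre]), hpre, max_le_iff]
    simp

lemma iterTimeSet_p3Interval_le [Finite V] (htf : G.CliqueFree 3) (T : Set V) :
    iterTimeSet (p3Interval G) T ≤ iterTimeSet (geoInterval (addUniversal G)) (some '' T) := by
  by_cases hT : G.IsClique T
  · have : iterTimeSet (p3Interval G) T ≤ 0 :=
      (iterTimeSet_le_iff (subset_p3Interval G) (p3Interval_mono G)).2
        (p3Interval_eq_self_of_isClique htf hT)
    omega
  · rw [iterTimeSet_geoInterval_image htf hT]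
    exact le_max_left _ _

end AddUniversal

lemma SimpleGraph.not_isClique_univ_of_cliqueFree {V : Type*} [Fintype V] {G : SimpleGraph V}
    {n : ℕ} (hG : G.CliqueFree n) (hn : n ≤ Fintype.card V) : ¬G.IsClique Set.univ := fun h => by
  obtain ⟨s, -, hs⟩ := Finset.exists_subset_card_eq (s := Finset.univ) hn
  exact hG s ⟨h.subset (Set.subset_univ _), hs⟩

open AddUniversal

/-- for a triangle-free graph `G` with at least 3 vertices, the geodesic
iteration time of `G` plus a universal vertex equals `max (ti_P3(G)) 1`. -/
theorem stmt12 {V : Type*} [Fintype V] (G : SimpleGraph V)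
    (htf : G.CliqueFree 3) (hV : 3 ≤ Fintype.card V) :
    iterTime (geoInterval (addUniversal G)) = max (iterTime (p3Interval G)) 1 := by
  have hbdd : BddAbove (Set.range fun S => iterTimeSet (geoInterval (addUniversal G)) S) :=
    (Set.finite_range _).bddAbove
  have hnonclique : ¬G.IsClique Set.univ := G.not_isClique_univ_of_cliqueFree htf hV
  refine le_antisymm (ciSup_le fun S => ?_) (max_le ?_ ?_)
  · exact (iterTimeSet_geoInterval_le htf S).trans
      (max_le_max_right 1 (le_ciSup (Set.finite_range _).bddAbove _))
  · exact ciSup_le fun T => (iterTimeSet_p3Interval_le htf T).trans (le_ciSup hbdd _)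
  · calc 1 ≤ max (iterTimeSet (p3Interval G) Set.univ) 1 := le_max_right _ _
      _ = iterTimeSet (geoInterval (addUniversal G)) (some '' Set.univ) :=
        (iterTimeSet_geoInterval_image htf hnonclique).symm
      _ ≤ iterTime (geoInterval (addUniversal G)) := le_ciSup hbdd _
end

section
/- Let G be a triangle-free graph with at least 3 vertices and let G_u be obtained from G by adding a universal vertex u. Then the general position number of G_u in the geodesic convexity equals max(gp_P3(G), ω(G) + 1), where gp_P3(G) is the P3 general position number of G and ω(G) is the clique number of G. -/
def p3GenPos {V : Type*} (G : SimpleGraph V) (S : Set V) : Prop :=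
  ∀ x ∈ S, ∀ y ∈ S, ∀ z ∈ S, x ≠ y → z ≠ x → z ≠ y → z ∉ p3Interval G {x, y}

/-- The P3 general position number. -/
noncomputable def gpP3 {V : Type*} [Fintype V] (G : SimpleGraph V) : ℕ :=
  sSup {m | ∃ S : Set V, p3GenPos G S ∧ S.ncard = m}

def geoGenPos {V : Type*} (G : SimpleGraph V) (S : Set V) : Prop :=
  ∀ x ∈ S, ∀ y ∈ S, ∀ z ∈ S, x ≠ y → z ≠ x → z ≠ y → z ∉ geoInterval G {x, y}

/-- The geodesic general position number. -/
noncomputable def gpGeo {V : Type*} [Fintype V] (G : SimpleGraph V) : ℕ :=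
  sSup {m | ∃ S : Set V, geoGenPos G S ∧ S.ncard = m}

/-!
Adding a universal vertex `u` brings the diameter down to at most two, so the geodesic interval of
two non-adjacent vertices consists of them and their common neighbours. Hence a set is in geodesic
general position exactly when it induces no `P₃`, i.e. when it induces a disjoint union of cliques.
Such a set containing `u` is `u` together with a clique of `G`; one avoiding `u` is a `P₃`-free
set of `G`, and when `G` is triangle-free these are exactly the `P₃` general position sets.
-/

namespace SimpleGraph

variable {V : Type*} {H : SimpleGraph V} {x y z : V}

lemma dist_eq_two_iff :
    H.dist x y = 2 ↔ x ≠ y ∧ ¬H.Adj x y ∧ (H.commonNeighbors x y).Nonempty := by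
  rw [dist, ENat.toNat_eq_iff two_ne_zero, Nat.cast_ofNat, edist_eq_two_iff]

lemma dist_le_two_of_forall_adj (u : V) (hu : ∀ v ≠ u, H.Adj u v) (x y : V) :
    H.dist x y ≤ 2 := by
  by_cases hxy : x = y
  · simp [hxy]
  by_cases hadj : H.Adj x y
  · simp [dist_eq_one_iff_adj.mpr hadj]
  have hxu : x ≠ u := fun h => hadj (h ▸ hu y (h ▸ Ne.symm hxy))
  have hyu : y ≠ u := fun h => hadj (h ▸ (hu x (h ▸ hxy)).symm)
  exact dist_le (Walk.cons (hu x hxu).symm (Walk.cons (hu y hyu) Walk.nil))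

lemma Walk.dist_eq_two_of_mem_support {p : H.Walk x y} (hp : p.length = H.dist x y)
    (h2 : H.dist x y ≤ 2) (hz : z ∈ p.support) (hzx : z ≠ x) (hzy : z ≠ y) :
    H.dist x y = 2 ∧ H.Adj x z ∧ H.Adj z y := by
  match p with
  | .nil => exact absurd (by simpa using hz) hzx
  | .cons _ .nil => simp_all
  | @Walk.cons _ _ _ w _ hxw (.cons hwy .nil) =>
    obtain rfl : z = w := by simp_all
    exact ⟨by simp [← hp], hxw, hwy⟩
  | .cons _ (.cons _ (.cons _ _)) => simp at hp; omega

lemma IsClique.ncard_le_cliqueNum [Finite V] {s : Set V} (hs : H.IsClique s) :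
    s.ncard ≤ H.cliqueNum := by
  rw [Set.ncard_eq_toFinset_card s]
  exact IsClique.card_le_cliqueNum (tc := by simpa using hs)

end SimpleGraph

open SimpleGraph

section SupNcard

variable {α : Type*} {P : Set α → Prop}

lemma le_sSup_ncard [Finite α] {S : Set α} (hS : P S) :
    S.ncard ≤ sSup {m | ∃ S, P S ∧ S.ncard = m} :=
  le_csSup ⟨Nat.card α, by rintro _ ⟨S, -, rfl⟩; exact S.ncard_le_card⟩ ⟨S, hS, rfl⟩

lemma sSup_ncard_le {n : ℕ} (h : ∀ S, P S → S.ncard ≤ n) :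
    sSup {m | ∃ S, P S ∧ S.ncard = m} ≤ n :=
  csSup_le' <| by rintro _ ⟨S, hS, rfl⟩; exact h S hS

end SupNcard

/-- `H[S]` has no induced `P₃`, i.e. it is a disjoint union of cliques. -/
def InducedP3Free {V : Type*} (H : SimpleGraph V) (S : Set V) : Prop :=
  ∀ x ∈ S, ∀ y ∈ S, ∀ z ∈ S, x ≠ y → H.Adj x z → H.Adj z y → H.Adj x y

section GeneralPosition

variable {V : Type*} {H : SimpleGraph V} {S : Set V} {x y z : V}

lemma SimpleGraph.IsClique.inducedP3Free (hS : H.IsClique S) : InducedP3Free H S :=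
  fun _ hx _ hy _ _ hxy _ _ => hS hx hy hxy

lemma mem_geoInterval_pair_iff (h2 : H.dist x y ≤ 2) :
    z ∈ geoInterval H {x, y} ↔ z = x ∨ z = y ∨ (H.dist x y = 2 ∧ H.Adj x z ∧ H.Adj z y) := by
  constructor
  · rintro ⟨a, ha, b, hb, p, -, hp, hz⟩
    by_cases hzx : z = x
    · exact .inl hzx
    by_cases hzy : z = y
    · exact .inr (.inl hzy)
    refine .inr (.inr ?_)
    rcases ha with rfl | rfl <;> rcases hb with rfl | rfl
    · simp [Walk.nil_iff_support_eq.mp (Walk.length_eq_zero_iff.mp (hp.trans dist_self))] at hz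
      exact absurd hz hzx
    · exact p.dist_eq_two_of_mem_support hp h2 hz hzx hzy
    · rw [SimpleGraph.dist_comm] at h2 ⊢
      obtain ⟨hd, hyz, hzx'⟩ := p.dist_eq_two_of_mem_support hp h2 hz hzy hzx
      exact ⟨hd, hzx'.symm, hyz.symm⟩
    · simp [Walk.nil_iff_support_eq.mp (Walk.length_eq_zero_iff.mp (hp.trans dist_self))] at hz
      exact absurd hz hzy
  · rintro (rfl | rfl | ⟨hd, hxz, hzy⟩)
    · exact ⟨z, by simp, z, by simp, .nil, by simp, by simp, by simp⟩
    · exact ⟨z, by simp, z, by simp, .nil, by simp, by simp, by simp⟩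
    · refine ⟨x, by simp, y, by simp, .cons hxz (.cons hzy .nil), ?_, by simp [hd], by simp⟩
      obtain ⟨hxy, -⟩ := dist_eq_two_iff.mp hd
      simp [Walk.isPath_def, hxz.ne, hzy.ne, hxy]

lemma geoGenPos_iff_inducedP3Free (h2 : ∀ x y, H.dist x y ≤ 2) :
    geoGenPos H S ↔ InducedP3Free H S := by
  constructor
  · intro hS x hx y hy z hz hxy hxz hzy
    by_contra hnxy
    have hd : H.dist x y = 2 := dist_eq_two_iff.mpr ⟨hxy, hnxy, z, hxz, hzy.symm⟩
    exact hS x hx y hy z hz hxy hxz.ne' hzy.ne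
      ((mem_geoInterval_pair_iff (h2 x y)).mpr (.inr (.inr ⟨hd, hxz, hzy⟩)))
  · intro hS x hx y hy z hz hxy hzx hzy hmem
    obtain ⟨hd, hxz, hzy⟩ := ((mem_geoInterval_pair_iff (h2 x y)).mp hmem).resolve_left
      hzx |>.resolve_left hzy
    exact (dist_eq_two_iff.mp hd).2.1 (hS x hx y hy z hz hxy hxz hzy)

lemma mem_p3Interval_pair_iff (hxy : x ≠ y) :
    z ∈ p3Interval H {x, y} ↔ z = x ∨ z = y ∨ (H.Adj z x ∧ H.Adj z y) := by
  simp only [p3Interval, Set.mem_union, Set.mem_insert_iff, Set.mem_singleton_iff]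
  aesop

lemma inducedP3Free_of_p3GenPos (hS : p3GenPos H S) : InducedP3Free H S :=
  fun x hx y hy z hz hxy hxz hzy => (hS x hx y hy z hz hxy hxz.ne' hzy.ne
    ((mem_p3Interval_pair_iff hxy).mpr (.inr (.inr ⟨hxz.symm, hzy⟩)))).elim

lemma p3GenPos_of_inducedP3Free (htf : H.CliqueFree 3) (hS : InducedP3Free H S) :
    p3GenPos H S := by
  classical
  intro x hx y hy z hz hxy hzx hzy hmem
  obtain ⟨hzx', hzy'⟩ := ((mem_p3Interval_pair_iff hxy).mp hmem).resolve_left hzx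
    |>.resolve_left hzy
  exact htf {x, y, z} (is3Clique_triple_iff.mpr
    ⟨hS x hx y hy z hz hxy hzx'.symm hzy', hzx'.symm, hzy'.symm⟩)

end GeneralPosition

section AddUniversal

variable {V : Type*} {G : SimpleGraph V}

@[simp]
lemma addUniversal_adj_some_some {a b : V} :
    (addUniversal G).Adj (some a) (some b) ↔ G.Adj a b := by
  simpa [addUniversal, G.adj_comm b a] using fun h : G.Adj a b => h.ne

@[simp]
lemma addUniversal_adj_none_some {a : V} : (addUniversal G).Adj none (some a) := by
  simp [addUniversal]

@[simp]
lemma addUniversal_adj_some_none {a : V} : (addUniversal G).Adj (some a) none :=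
  addUniversal_adj_none_some.symm

lemma addUniversal_dist_le_two (x y : Option V) : (addUniversal G).dist x y ≤ 2 :=
  dist_le_two_of_forall_adj none (fun v hv => by
    obtain ⟨a, rfl⟩ := Option.ne_none_iff_exists'.mp hv
    exact addUniversal_adj_none_some) x y

lemma inducedP3Free_image_some_iff {T : Set V} :
    InducedP3Free (addUniversal G) (some '' T) ↔ InducedP3Free G T := by
  simp [InducedP3Free]

lemma inducedP3Free_insert_none_iff {T : Set V} :
    InducedP3Free (addUniversal G) (insert none (some '' T)) ↔ G.IsClique T := by
  refine ⟨fun hS x hx y hy hxy => ?_, fun hT => IsClique.inducedP3Free ?_⟩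
  · simpa using hS (some x) (by simp [hx]) (some y) (by simp [hy]) none (by simp) (by simpa)
      addUniversal_adj_some_none addUniversal_adj_none_some
  · rw [isClique_insert]
    refine ⟨?_, by simp⟩
    rintro _ ⟨a, ha, rfl⟩ _ ⟨b, hb, rfl⟩ hab
    exact addUniversal_adj_some_some.mpr (hT ha hb (by rintro rfl; exact hab rfl))

end AddUniversal

lemma Option.exists_set_eq_image_some_or_eq_insert_none {α : Type*} (S : Set (Option α)) :
    ∃ T : Set α, S = some '' T ∨ S = insert none (some '' T) := by
  refine ⟨some ⁻¹' S, ?_⟩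
  by_cases h : none ∈ S
  · right; ext (_ | _) <;> simp [h]
  · left; ext (_ | _) <;> simp [h]

section Bounds

variable {V : Type*} [Fintype V] {G : SimpleGraph V}

lemma gpP3_le_gpGeo_addUniversal : gpP3 G ≤ gpGeo (addUniversal G) :=
  sSup_ncard_le fun T hT => by
    rw [← Set.ncard_image_of_injective T (Option.some_injective V)]
    refine le_sSup_ncard ?_
    rw [geoGenPos_iff_inducedP3Free addUniversal_dist_le_two, inducedP3Free_image_some_iff]
    exact inducedP3Free_of_p3GenPos hT

lemma cliqueNum_add_one_le_gpGeo_addUniversal : G.cliqueNum + 1 ≤ gpGeo (addUniversal G) := by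
  obtain ⟨Q, hQ⟩ := G.exists_isNClique_cliqueNum
  have hcard : (insert none (some '' (Q : Set V))).ncard = G.cliqueNum + 1 := by
    rw [Set.ncard_insert_of_notMem (by simp),
      Set.ncard_image_of_injective _ (Option.some_injective V), Set.ncard_coe_finset, hQ.card_eq]
  rw [← hcard]
  refine le_sSup_ncard ?_
  rw [geoGenPos_iff_inducedP3Free addUniversal_dist_le_two, inducedP3Free_insert_none_iff]
  exact hQ.isClique

lemma gpGeo_addUniversal_le (htf : G.CliqueFree 3) :
    gpGeo (addUniversal G) ≤ max (gpP3 G) (G.cliqueNum + 1) :=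
  sSup_ncard_le fun S hS => by
    rw [geoGenPos_iff_inducedP3Free addUniversal_dist_le_two] at hS
    obtain ⟨T, rfl | rfl⟩ := Option.exists_set_eq_image_some_or_eq_insert_none S
    · rw [inducedP3Free_image_some_iff] at hS
      rw [Set.ncard_image_of_injective T (Option.some_injective V)]
      exact le_max_of_le_left (le_sSup_ncard (p3GenPos_of_inducedP3Free htf hS))
    · rw [inducedP3Free_insert_none_iff] at hS
      rw [Set.ncard_insert_of_notMem (by simp), Set.ncard_image_of_injective T
        (Option.some_injective V)]
      exact le_max_of_le_right (Nat.add_le_add_right hS.ncard_le_cliqueNum 1)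

end Bounds

theorem stmt13_general {V : Type*} [Fintype V] (G : SimpleGraph V)
    (htf : G.CliqueFree 3) :
    gpGeo (addUniversal G) = max (gpP3 G) (G.cliqueNum + 1) :=
  le_antisymm (gpGeo_addUniversal_le htf)
    (max_le gpP3_le_gpGeo_addUniversal cliqueNum_add_one_le_gpGeo_addUniversal)

/-- for a triangle-free graph `G` with at least 3 vertices, the geodesic
general position number of `G` plus a universal vertex equals `max (gp_P3(G)) (ω(G)+1)`. -/
theorem stmt13 {V : Type*} [Fintype V] (G : SimpleGraph V)
    (htf : G.CliqueFree 3) (hV : 3 ≤ Fintype.card V) :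
    gpGeo (addUniversal G) = max (gpP3 G) (G.cliqueNum + 1) :=
  stmt13_general G htf
end

section
/- Let H be a graph whose vertex set is partitioned into k color classes S_1, ..., S_k, each inducing a clique, and let G' be obtained from H by adding k new vertices u_1, ..., u_k where u_i is adjacent exactly to the vertices of S_i. Then G' has a set of 2k vertices in general position in the P3 convexity if and only if H has an independent set containing exactly one vertex of each S_i. -/
/-- The graph `G'` of the multicolored-independent-set reduction: `H` together with
new vertices `u_i` (`Sum.inr i`), where `u_i` is adjacent exactly to the color class
`S_i = c⁻¹(i)`. -/
def gadget {V : Type*} (H : SimpleGraph V) (k : ℕ) (c : V → Fin k) :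
    SimpleGraph (V ⊕ Fin k) :=
  SimpleGraph.fromRel (fun a b =>
    (∃ u v : V, a = Sum.inl u ∧ b = Sum.inl v ∧ H.Adj u v) ∨
    (∃ (i : Fin k) (v : V), a = Sum.inr i ∧ b = Sum.inl v ∧ c v = i))

/-!
The classes `S_i ∪ {u_i}` are cliques covering `G'`, and a set in P3 general position meets a
clique in at most two vertices; so a general-position set of size `2k` meets every class in
exactly two vertices, at least one of which lies in `S_i`. Two such vertices of `H` in distinct
classes cannot be adjacent, since the first would then have two neighbours in the set. Conversely,
a multicolored independent set together with all the `u_i` induces a perfect matching.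
-/

section GeneralPosition

variable {W ι : Type*} {G : SimpleGraph W} {S : Set W}

theorem p3GenPos_iff :
    p3GenPos G S ↔ ∀ z ∈ S, ∀ x ∈ S, ∀ y ∈ S, G.Adj z x → G.Adj z y → x = y := by
  constructor
  · intro h z hz x hx y hy hzx hzy
    by_contra hxy
    exact h x hx y hy z hz hxy hzx.ne hzy.ne (Or.inr ⟨x, by simp, y, by simp, hxy, hzx, hzy⟩)
  · rintro h x hx y hy z hz - hzx hzy (hxy | ⟨a, ha, b, hb, hab, hza, hzb⟩)
    · rcases hxy with rfl | rfl <;> contradiction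
    · have hpair : {x, y} ⊆ S := Set.insert_subset hx (Set.singleton_subset_iff.mpr hy)
      exact hab (h z hz a (hpair ha) b (hpair hb) hza hzb)

variable {col : W → ι}

theorem p3GenPos.ncard_inter_preimage_le_two (hS : p3GenPos G S)
    (hcol : ∀ a b, col a = col b → a ≠ b → G.Adj a b) (i : ι) :
    (S ∩ col ⁻¹' {i}).ncard ≤ 2 := by
  by_contra! h
  obtain ⟨a, b, d, ha, hb, hd, hab, had, hbd⟩ :=
    (Set.two_lt_ncard_iff (Set.finite_of_ncard_pos (by omega))).mp h
  exact hab (p3GenPos_iff.mp hS d hd.1 a ha.1 b hb.1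
    (hcol d a (hd.2.trans ha.2.symm) (Ne.symm had)) (hcol d b (hd.2.trans hb.2.symm) (Ne.symm hbd)))

theorem p3GenPos.ncard_inter_preimage_eq_two [Fintype ι] (hS : p3GenPos G S)
    (hcol : ∀ a b, col a = col b → a ≠ b → G.Adj a b)
    (hcard : S.ncard = 2 * Fintype.card ι) (i : ι) :
    (S ∩ col ⁻¹' {i}).ncard = 2 := by
  have hle : ∀ j ∈ Finset.univ, (S ∩ col ⁻¹' {j}).ncard ≤ 2 :=
    fun j _ => hS.ncard_inter_preimage_le_two hcol j
  have hsum : ∑ j, (S ∩ col ⁻¹' {j}).ncard = ∑ _j : ι, 2 := by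
    refine le_antisymm (Finset.sum_le_sum hle) ?_
    calc ∑ _j : ι, 2 = S.ncard := by simp [hcard, mul_comm]
      _ = (⋃ j, S ∩ col ⁻¹' {j}).ncard := by congr 1; ext; simp
      _ ≤ ∑ j, (S ∩ col ⁻¹' {j}).ncard := Set.ncard_iUnion_le_of_fintype _
  exact (Finset.sum_eq_sum_iff_of_le hle).mp hsum i (Finset.mem_univ i)

end GeneralPosition

section Gadget

variable {V : Type*} {H : SimpleGraph V} {k : ℕ} {c : V → Fin k}

@[simp]
theorem gadget_adj_inl_inl {u v : V} :
    (gadget H k c).Adj (Sum.inl u) (Sum.inl v) ↔ H.Adj u v := by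
  simpa [gadget, H.adj_comm v u] using H.ne_of_adj

@[simp]
theorem gadget_adj_inr_inl {i : Fin k} {v : V} :
    (gadget H k c).Adj (Sum.inr i) (Sum.inl v) ↔ c v = i := by
  simp [gadget, eq_comm]

@[simp]
theorem gadget_adj_inl_inr {i : Fin k} {v : V} :
    (gadget H k c).Adj (Sum.inl v) (Sum.inr i) ↔ c v = i := by
  rw [SimpleGraph.adj_comm, gadget_adj_inr_inl]

@[simp]
theorem gadget_adj_inr_inr {i j : Fin k} : ¬(gadget H k c).Adj (Sum.inr i) (Sum.inr j) := by
  simp [gadget]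

theorem gadget_adj_of_color_eq (hclique : ∀ u v : V, c u = c v → u ≠ v → H.Adj u v) :
    ∀ a b, Sum.elim c id a = Sum.elim c id b → a ≠ b → (gadget H k c).Adj a b := by
  rintro (u | i) (v | j) hcol hne
  · exact gadget_adj_inl_inl.mpr (hclique u v hcol fun h => hne (h ▸ rfl))
  · exact gadget_adj_inl_inr.mpr hcol
  · exact gadget_adj_inr_inl.mpr hcol.symm
  · exact absurd (congrArg Sum.inr hcol) hne

theorem exists_inl_mem_of_one_lt_ncard {S : Set (V ⊕ Fin k)} {i : Fin k}
    (h : 1 < (S ∩ Sum.elim c id ⁻¹' {i}).ncard) :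
    ∃ v, c v = i ∧ Sum.inl v ∈ S ∧ ∃ w ∈ S, w ≠ Sum.inl v ∧ Sum.elim c id w = i := by
  obtain ⟨a, b, ⟨ha, hai⟩, ⟨hb, hbi⟩, hab⟩ :=
    (Set.one_lt_ncard_iff (Set.finite_of_ncard_pos (by omega))).mp h
  simp only [Set.mem_preimage, Set.mem_singleton_iff] at hai hbi
  rcases a with u | j
  · exact ⟨u, hai, ha, b, hb, Ne.symm hab, hbi⟩
  rcases b with v | l
  · exact ⟨v, hbi, hb, _, ha, hab, hai⟩
  · exact absurd (by simp_all) hab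

/-- A multicolored independent set `f` matches `f i` with `u_i` and induces nothing else. -/
theorem gadget_adj_sumMap_iff {f : Fin k → V} (hf : ∀ i, c (f i) = i)
    (hind : ∀ i j, i ≠ j → ¬H.Adj (f i) (f j)) (a b : Fin k ⊕ Fin k) :
    (gadget H k c).Adj (Sum.map f id a) (Sum.map f id b) ↔ b = a.swap := by
  rcases a with i | i <;> rcases b with j | j
  · simp only [Sum.map_inl, gadget_adj_inl_inl, Sum.swap_inl, reduceCtorEq, iff_false]
    rcases eq_or_ne i j with rfl | hij
    · exact H.irrefl
    · exact hind i j hij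
  · simp [hf, eq_comm]
  · simp [hf]
  · simp

end Gadget

theorem stmt15_general {V : Type*} (H : SimpleGraph V) (k : ℕ) (c : V → Fin k)
    (hclique : ∀ u v : V, c u = c v → u ≠ v → H.Adj u v) :
    (∃ S : Set (V ⊕ Fin k), p3GenPos (gadget H k c) S ∧ S.ncard = 2 * k) ↔
    (∃ f : Fin k → V, (∀ i, c (f i) = i) ∧
      ∀ i j, i ≠ j → ¬ H.Adj (f i) (f j)) := by
  have hcol := gadget_adj_of_color_eq hclique
  constructor
  · rintro ⟨S, hS, hcard⟩
    have hpair i : ∃ v, c v = i ∧ Sum.inl v ∈ S ∧ ∃ w ∈ S, w ≠ Sum.inl v ∧ Sum.elim c id w = i :=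
      exists_inl_mem_of_one_lt_ncard <| by
        rw [hS.ncard_inter_preimage_eq_two hcol (by simpa using hcard)]; omega
    choose f hf hfS w hwS hwf hw using hpair
    refine ⟨f, hf, fun i j hij hadj => ?_⟩
    have hwj : w i ≠ Sum.inl (f j) := fun h => hij (by simpa [h, hf] using (hw i).symm)
    exact hwj (p3GenPos_iff.mp hS _ (hfS i) _ (hwS i) _ (hfS j)
      (hcol _ _ (by simp [hf, hw]) (hwf i).symm) (gadget_adj_inl_inl.mpr hadj))
  · rintro ⟨f, hf, hind⟩
    refine ⟨Set.range (Sum.map f id), ?_, ?_⟩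
    · rw [p3GenPos_iff]
      rintro _ ⟨a, rfl⟩ _ ⟨b, rfl⟩ _ ⟨d, rfl⟩ hab had
      rw [gadget_adj_sumMap_iff hf hind] at hab had
      rw [hab, had]
    · rw [Set.ncard_range_of_injective
        (Sum.map_injective.mpr ⟨Function.LeftInverse.injective hf, Function.injective_id⟩)]
      simp [two_mul]

/-- if each color class of `H` induces a clique, then the gadget graph
`G'` has a set of `2k` vertices in P3 general position iff `H` has a multicolored
`k`-independent set (one vertex of each color class). -/
theorem stmt15 {V : Type*} [Fintype V] (H : SimpleGraph V) (k : ℕ) (c : V → Fin k)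
    (hclique : ∀ u v : V, c u = c v → u ≠ v → H.Adj u v) :
    (∃ S : Set (V ⊕ Fin k), p3GenPos (gadget H k c) S ∧ S.ncard = 2 * k) ↔
    (∃ f : Fin k → V, (∀ i, c (f i) = i) ∧
      ∀ i j, i ≠ j → ¬ H.Adj (f i) (f j)) :=
  stmt15_general H k c hclique
end

section
/- If a graph G has a vertex cover of size at most c, then G has neighborhood diversity at most 2^c + c; that is, V(G) can be partitioned into at most 2^c + c classes such that any two vertices in the same class are twins (have the same neighbors outside the pair). -/
/-!
Outside a vertex cover `W` there are no edges, so a vertex `v ∉ W` is determined up to twins by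
its neighbourhood in `W`, one of `2 ^ |W|` subsets. Labelling each vertex of `W` by itself and
every other vertex by its neighbourhood in `W` therefore gives a partition into at most
`2 ^ |W| + |W|` classes of twins.
-/

namespace SimpleGraph

variable {V : Type*} (G : SimpleGraph V) {W : Set V}

open Classical in
noncomputable def coverTwinLabel (W : Set V) (v : V) : Set W ⊕ W :=
  if h : v ∈ W then .inr ⟨v, h⟩ else .inl {w | G.Adj v w}

variable {G}

theorem adj_iff_of_notMem_cover (hW : ∀ u v, G.Adj u v → u ∈ W ∨ v ∈ W) {u v : V}
    (hu : u ∉ W) (hv : v ∉ W) (h : ∀ w ∈ W, G.Adj u w ↔ G.Adj v w) (x : V) :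
    G.Adj u x ↔ G.Adj v x := by
  by_cases hx : x ∈ W
  · exact h x hx
  · have not_adj {y : V} (hy : y ∉ W) : ¬G.Adj y x := fun hyx =>
      (hW y x hyx).elim hy hx
    exact iff_of_false (not_adj hu) (not_adj hv)

theorem adj_iff_of_coverTwinLabel_eq (hW : ∀ u v, G.Adj u v → u ∈ W ∨ v ∈ W) {u v : V}
    (h : G.coverTwinLabel W u = G.coverTwinLabel W v) (x : V) : G.Adj u x ↔ G.Adj v x := by
  unfold coverTwinLabel at h
  by_cases hu : u ∈ W <;> by_cases hv : v ∈ W <;> simp only [hu, hv, dite_true, dite_false] at h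
  · cases congrArg Subtype.val (Sum.inr_injective h)
    rfl
  · cases h
  · cases h
  · refine adj_iff_of_notMem_cover hW hu hv (fun w hw => ?_) x
    exact Set.ext_iff.mp (Sum.inl_injective h) ⟨w, hw⟩

end SimpleGraph

/-- a graph with a vertex cover of size at most `c` has neighborhood
diversity at most `2^c + c`: the vertices can be partitioned into at most `2^c + c`
classes of pairwise twins. -/
theorem stmt16 {V : Type*} [Fintype V] (G : SimpleGraph V) (c : ℕ) (W : Set V)
    (hWcard : W.ncard ≤ c) (hWcov : ∀ u v : V, G.Adj u v → u ∈ W ∨ v ∈ W) :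
    ∃ (m : ℕ) (f : V → Fin m), m ≤ 2 ^ c + c ∧
      ∀ u v : V, f u = f v →
        ∀ w : V, w ≠ u → w ≠ v → (G.Adj u w ↔ G.Adj v w) := by
  classical
  let e := Fintype.equivFin (Set W ⊕ W)
  refine ⟨_, e ∘ G.coverTwinLabel W, ?_, fun u v huv w _ _ =>
    SimpleGraph.adj_iff_of_coverTwinLabel_eq hWcov (e.injective huv) w⟩
  have hW : Fintype.card W = W.ncard := by rw [← Nat.card_eq_fintype_card, Nat.card_coe_set_eq]
  rw [Fintype.card_sum, Fintype.card_set, hW]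
  exact Nat.add_le_add (Nat.pow_le_pow_right two_pos hWcard) hWcard
end
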